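/- arXiv:2409.03492 — 5 statements merged into one kernel-verified Lean document; each statement's English description precedes it below -/
import Mathlib

section
/- Let ξ ∈ ℝ, μₙ ∈ ℝ and σ, σₙ > 0. Then the expectation of the Gaussian log-density with respect to a Gaussian over the mean satisfies ∫ log N(ξ | μ, σ²) dN(μₙ, σₙ²)(μ) = log N(ξ | μₙ, σ²) − σₙ²/(2σ²). -/
open MeasureTheory ProbabilityTheory Real
open scoped ENNReal NNReal

lemma aux_sq_gauss {b : ℝ} (hb : 0 < b) :
    ∫ x : ℝ, x ^ 2 * rexp (-b * x ^ 2) = (2 * b)⁻¹ * Real.sqrt (π / b) := by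
  have hderiv : ∀ x : ℝ, HasDerivAt (fun x : ℝ => x * rexp (-b * x ^ 2))
      (rexp (-b * x ^ 2) - 2 * b * (x ^ 2 * rexp (-b * x ^ 2))) x := by
    intro x
    have h1 : HasDerivAt (fun x : ℝ => -b * x ^ 2) (-b * (2 * x)) x := by
      simpa using ((hasDerivAt_pow 2 x).const_mul (-b))
    have : HasDerivAt (fun y : ℝ => y * rexp (-b * y ^ 2))
        (1 * rexp (-b * x ^ 2) + x * (rexp (-b * x ^ 2) * (-b * (2 * x)))) x := (hasDerivAt_id x).mul h1.exp
    convert this using 1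
    simp
    ring
  have I1 : Integrable (fun x : ℝ => rexp (-b * x ^ 2)) := integrable_exp_neg_mul_sq hb
  have I2 : Integrable (fun x : ℝ => x ^ 2 * rexp (-b * x ^ 2)) := by
    have := integrable_rpow_mul_exp_neg_mul_sq hb (s := 2) (by norm_num)
    simpa [Real.rpow_two] using this
  have If : Integrable (fun x : ℝ => x * rexp (-b * x ^ 2)) := integrable_mul_exp_neg_mul_sq hb
  have h0 := integral_eq_zero_of_hasDerivAt_of_integrable hderiv
    (I1.sub (I2.const_mul (2 * b))) If
  rw [integral_sub I1 (I2.const_mul (2 * b)), integral_const_mul, integral_gaussian,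
    sub_eq_zero] at h0
  field_simp at h0 ⊢
  linarith

lemma aux_integral_gaussianReal (m : ℝ) {v : ℝ≥0} (hv : v ≠ 0) (g : ℝ → ℝ) :
    ∫ x, g x ∂(gaussianReal m v) = ∫ x, gaussianPDFReal m v x * g x := by
  rw [gaussianReal_of_var_ne_zero m hv]
  have : (gaussianPDF m v) = fun x => ((gaussianPDFReal m v x).toNNReal : ℝ≥0∞) := rfl
  rw [this, integral_withDensity_eq_integral_smul
    ((measurable_gaussianPDFReal m v).real_toNNReal) g]
  congr 1 with x
  simp [NNReal.smul_def, Real.coe_toNNReal _ (gaussianPDFReal_nonneg m v x)]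

lemma aux_pdf0 (v : ℝ≥0) (x : ℝ) :
    gaussianPDFReal 0 v x = (Real.sqrt (2 * π * v))⁻¹ * rexp (-(2 * (v:ℝ))⁻¹ * x ^ 2) := by
  rw [gaussianPDFReal]
  congr 1
  rw [sub_zero]
  congr 1
  rw [neg_div, neg_mul]
  congr 1
  rw [div_eq_inv_mul]

lemma aux_J1 (v : ℝ≥0) : ∫ x, gaussianPDFReal 0 v x * x = 0 := by
  have h := MeasureTheory.Measure.integral_comp_mul_left
    (fun x => gaussianPDFReal 0 v x * x) (-1)
  simp only [neg_one_mul, gaussianPDFReal, mul_neg, abs_neg, abs_one, inv_neg, inv_one,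
    abs_of_nonneg, smul_eq_mul, one_mul] at h
  have h2 : ∀ x : ℝ, (-x - 0) ^ 2 = (x - 0) ^ 2 := by intro x; ring
  simp_rw [h2, integral_neg] at h
  simp only [gaussianPDFReal]
  linarith

lemma aux_J2 {v : ℝ≥0} (hv : v ≠ 0) : ∫ x, gaussianPDFReal 0 v x * x ^ 2 = v := by
  have hvpos : (0:ℝ) < v := lt_of_le_of_ne v.coe_nonneg (by exact_mod_cast hv.symm)
  have hb : (0:ℝ) < (2 * (v:ℝ))⁻¹ := by positivity
  simp_rw [aux_pdf0 v, mul_assoc, mul_comm (rexp _), integral_const_mul, aux_sq_gauss hb]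
  have h1 : (2 * (2 * (v:ℝ))⁻¹)⁻¹ = v := by field_simp
  have h2 : π / (2 * (v:ℝ))⁻¹ = 2 * (π * v) := by field_simp
  rw [h1, h2]
  have h3 : Real.sqrt (2 * (π * v)) ≠ 0 := Real.sqrt_ne_zero'.mpr (by positivity)
  field_simp

theorem expected_gaussian_log_density_known_variance
    (ξ μₙ σ σₙ : ℝ) (hσ : 0 < σ) (hσₙ : 0 < σₙ) :
    ∫ μ, Real.log (gaussianPDFReal μ (Real.toNNReal (σ ^ 2)) ξ)
        ∂(gaussianReal μₙ (Real.toNNReal (σₙ ^ 2)))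
      = Real.log (gaussianPDFReal μₙ (Real.toNNReal (σ ^ 2)) ξ) - σₙ ^ 2 / (2 * σ ^ 2) := by
  set v : ℝ≥0 := Real.toNNReal (σ ^ 2) with hv_def
  set vₙ : ℝ≥0 := Real.toNNReal (σₙ ^ 2) with hvn_def
  have hvcoe : (v : ℝ) = σ ^ 2 := Real.coe_toNNReal _ (sq_nonneg σ)
  have hvncoe : (vₙ : ℝ) = σₙ ^ 2 := Real.coe_toNNReal _ (sq_nonneg σₙ)
  have hv : v ≠ 0 := by
    intro h
    have := hvcoe
    rw [h] at this
    simp at this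
    nlinarith
  have hvn : vₙ ≠ 0 := by
    intro h
    have := hvncoe
    rw [h] at this
    simp at this
    nlinarith
  have hvnpos : (0:ℝ) < (vₙ:ℝ) := by rw [hvncoe]; positivity
  set C : ℝ := -Real.log (Real.sqrt (2 * π * σ ^ 2)) with hC
  have hlog : ∀ m : ℝ, Real.log (gaussianPDFReal m v ξ) = C - (ξ - m) ^ 2 / (2 * σ ^ 2) := by
    intro m
    rw [gaussianPDFReal, hvcoe]
    have hs : Real.sqrt (2 * π * σ ^ 2) ≠ 0 := Real.sqrt_ne_zero'.mpr (by positivity)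
    rw [Real.log_mul (inv_ne_zero hs) (Real.exp_ne_zero _), Real.log_inv, Real.log_exp]
    rw [hC]
    ring
  rw [aux_integral_gaussianReal μₙ hvn]
  simp_rw [hlog]
  rw [← integral_add_right_eq_self
    (fun μ => gaussianPDFReal μₙ vₙ μ * (C - (ξ - μ) ^ 2 / (2 * σ ^ 2))) μₙ]
  have hshift : ∀ x : ℝ, gaussianPDFReal μₙ vₙ (x + μₙ) = gaussianPDFReal 0 vₙ x := by
    intro x
    simp [gaussianPDFReal]
  set c : ℝ := ξ - μₙ with hc
  have hexp : ∀ x : ℝ,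
      gaussianPDFReal μₙ vₙ (x + μₙ) * (C - (ξ - (x + μₙ)) ^ 2 / (2 * σ ^ 2))
        = (C - c ^ 2 / (2 * σ ^ 2)) * gaussianPDFReal 0 vₙ x
          + ((c / σ ^ 2) * (gaussianPDFReal 0 vₙ x * x)
            + (-(2 * σ ^ 2)⁻¹) * (gaussianPDFReal 0 vₙ x * x ^ 2)) := by
    intro x
    rw [hshift x]
    have hσ2 : σ ^ 2 ≠ 0 := by positivity
    field_simp
    ring
  simp only [hexp]
  have hb : (0:ℝ) < (2 * (vₙ:ℝ))⁻¹ := by positivity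
  have Ip : Integrable (gaussianPDFReal 0 vₙ) := integrable_gaussianPDFReal 0 vₙ
  have Ix : Integrable (fun x : ℝ => gaussianPDFReal 0 vₙ x * x) := by
    simp_rw [aux_pdf0, mul_assoc]
    apply Integrable.const_mul
    simpa [mul_comm] using integrable_mul_exp_neg_mul_sq hb
  have Ix2 : Integrable (fun x : ℝ => gaussianPDFReal 0 vₙ x * x ^ 2) := by
    simp_rw [aux_pdf0, mul_assoc]
    apply Integrable.const_mul
    have := integrable_rpow_mul_exp_neg_mul_sq hb (s := 2) (by norm_num)
    simp only [Real.rpow_two] at this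
    simpa [mul_comm] using this
  rw [integral_add (f := fun x => (C - c ^ 2 / (2 * σ ^ 2)) * gaussianPDFReal 0 vₙ x)
      (g := fun x => c / σ ^ 2 * (gaussianPDFReal 0 vₙ x * x)
        + -(2 * σ ^ 2)⁻¹ * (gaussianPDFReal 0 vₙ x * x ^ 2))
      (Ip.const_mul _) ((Ix.const_mul _).add (Ix2.const_mul _)),
    integral_add (f := fun x => c / σ ^ 2 * (gaussianPDFReal 0 vₙ x * x))
      (g := fun x => -(2 * σ ^ 2)⁻¹ * (gaussianPDFReal 0 vₙ x * x ^ 2))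
      (Ix.const_mul _) (Ix2.const_mul _),
    integral_const_mul, integral_const_mul, integral_const_mul,
    integral_gaussianPDFReal_eq_one 0 hvn, aux_J1 vₙ, aux_J2 hvn, hvncoe]
  ring
end

section
/- Let αₙ, βₙ > 0. For every probability measure Q on [0, ∞) absolutely continuous with respect to Lebesgue measure, with density q such that q·log q is Lebesgue-integrable and ξ ↦ q(ξ)·ξ is Lebesgue-integrable, the gamma-posterior-averaged KL divergence satisfies ∫ KL(Q ‖ Exp(θ)) dGamma(αₙ, βₙ)(θ) = KL(Q ‖ Exp(αₙ/βₙ)) + log αₙ − ψ(αₙ), where ψ is the digamma function. -/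
open MeasureTheory ProbabilityTheory Real
open scoped ENNReal NNReal Classical

/-- Kullback-Leibler divergence: `∫ log (dQ/dP) dQ` when `Q ≪ P` and the
log-likelihood ratio is integrable, `+∞` otherwise. -/
noncomputable def klDiv {Ω : Type*} [MeasurableSpace Ω] (Q P : Measure Ω) : ℝ≥0∞ :=
  if Q ≪ P ∧ Integrable (fun x => Real.log (Q.rnDeriv P x).toReal) Q
  then ENNReal.ofReal (∫ x, Real.log (Q.rnDeriv P x).toReal ∂Q)
  else ⊤

/-- The digamma function: derivative of `log ∘ Γ`. -/
noncomputable def digamma (x : ℝ) : ℝ := deriv (fun y => Real.log (Real.Gamma y)) x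

open Set Filter
open scoped Topology

lemma aux_mellin {α : ℝ} (hα : 0 < α) :
    MellinConvergent (fun t => Real.log t • ((Real.exp (-t) : ℝ) : ℂ)) (α : ℂ) ∧
      HasDerivAt (mellin fun x => ((Real.exp (-x) : ℝ) : ℂ))
        (mellin (fun t => Real.log t • ((Real.exp (-t) : ℝ) : ℂ)) (α : ℂ)) (α : ℂ) := by
  refine mellin_hasDerivAt_of_isBigO_rpow (a := (α:ℂ).re + 1) (b := 0) ?_ ?_ (lt_add_one _) ?_
    (by simpa using hα)
  · refine (Continuous.continuousOn ?_).locallyIntegrableOn measurableSet_Ioi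
    exact Complex.continuous_ofReal.comp (Real.continuous_exp.comp continuous_neg)
  · rw [← Asymptotics.isBigO_norm_left]
    simp_rw [Complex.norm_real,
      Asymptotics.isBigO_norm_left]
    simpa only [neg_one_mul] using (isLittleO_exp_neg_mul_rpow_atTop zero_lt_one _).isBigO
  · simp_rw [neg_zero, Real.rpow_zero]
    refine Asymptotics.isBigO_const_of_tendsto (?_ : Tendsto _ _ (𝓝 (1 : ℂ))) one_ne_zero
    rw [(by simp : (1 : ℂ) = Real.exp (-0))]
    exact (Complex.continuous_ofReal.comp
      (Real.continuous_exp.comp continuous_neg)).continuousWithinAt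

lemma aux_integrableOn_log_gamma {α : ℝ} (hα : 0 < α) :
    IntegrableOn (fun t => Real.log t * (t ^ (α - 1) * Real.exp (-t))) (Set.Ioi 0) := by
  have h := (aux_mellin hα).1
  rw [MellinConvergent] at h
  have hn := h.norm
  refine (Integrable.mono' hn ?_ ?_)
  · have hc : ContinuousOn (fun t : ℝ => Real.log t * (t ^ (α - 1) * Real.exp (-t))) (Ioi 0) := by
      apply ContinuousOn.mul
      · exact Real.continuousOn_log.mono (fun x hx => ne_of_gt hx)
      · apply ContinuousOn.mul
        · intro x hx
          exact (Real.continuousAt_rpow_const x _ (Or.inl (ne_of_gt hx))).continuousWithinAt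
        · exact (Real.continuous_exp.comp continuous_neg).continuousOn
    exact hc.aestronglyMeasurable measurableSet_Ioi
  · refine (ae_restrict_iff' measurableSet_Ioi).2 (ae_of_all _ fun t ht => ?_)
    have ht' : (0:ℝ) < t := ht
    rw [norm_smul, norm_smul]
    simp only [Complex.norm_real, Real.norm_eq_abs,
      Complex.norm_cpow_eq_rpow_re_of_pos ht']
    rw [abs_mul, abs_mul, abs_of_nonneg (Real.rpow_nonneg ht'.le _),
      abs_of_nonneg (Real.exp_pos _).le]
    simp [Complex.sub_re, Complex.ofReal_re]
    ring_nf
    exact le_refl _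

lemma aux_hasDerivAt_Gamma {α : ℝ} (hα : 0 < α) :
    HasDerivAt Real.Gamma (∫ t in Set.Ioi (0:ℝ), Real.log t * (t ^ (α - 1) * Real.exp (-t))) α := by
  have h1 := Complex.hasDerivAt_GammaIntegral (s := (α : ℂ)) (by simpa using hα)
  have h2 : HasDerivAt Complex.Gamma
      (∫ t : ℝ in Ioi 0, (t : ℂ) ^ ((α : ℂ) - 1) * (Real.log t * Real.exp (-t))) (α : ℂ) := by
    refine h1.congr_of_eventuallyEq ?_
    have hopen : IsOpen {s : ℂ | 0 < s.re} := isOpen_lt continuous_const Complex.continuous_re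
    filter_upwards [hopen.mem_nhds (by simpa using hα)] with s hs
    exact Complex.Gamma_eq_integral hs
  have h3 := h2.real_of_complex
  have h4 : (∫ t : ℝ in Ioi 0, (t : ℂ) ^ ((α : ℂ) - 1) * (Real.log t * Real.exp (-t))).re
      = ∫ t in Set.Ioi (0:ℝ), Real.log t * (t ^ (α - 1) * Real.exp (-t)) := by
    have : (∫ t : ℝ in Ioi 0, (t : ℂ) ^ ((α : ℂ) - 1) * (Real.log t * Real.exp (-t)))
        = ((∫ t in Set.Ioi (0:ℝ), Real.log t * (t ^ (α - 1) * Real.exp (-t)) : ℝ) : ℂ) := by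
      rw [show ((∫ t in Set.Ioi (0:ℝ), Real.log t * (t ^ (α - 1) * Real.exp (-t)) : ℝ) : ℂ)
          = (@RCLike.ofReal ℂ _
            (∫ t in Set.Ioi (0:ℝ), Real.log t * (t ^ (α - 1) * Real.exp (-t)))) from rfl,
        ← _root_.integral_ofReal]
      refine setIntegral_congr_fun measurableSet_Ioi fun t ht => ?_
      rw [show (@RCLike.ofReal ℂ _ (Real.log t * (t ^ (α - 1) * Real.exp (-t))))
          = ((Real.log t * (t ^ (α - 1) * Real.exp (-t)) : ℝ) : ℂ) from rfl]
      rw [Complex.ofReal_mul, Complex.ofReal_mul, Complex.ofReal_cpow (le_of_lt ht)]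
      push_cast
      ring
    rw [this, Complex.ofReal_re]
  rw [h4] at h3
  have h5 : (fun x : ℝ => (Complex.Gamma x).re) = Real.Gamma := rfl
  rwa [h5] at h3

lemma aux_digamma_eq {α : ℝ} (hα : 0 < α) :
    (∫ t in Set.Ioi (0:ℝ), Real.log t * (t ^ (α - 1) * Real.exp (-t)))
      = digamma α * Real.Gamma α := by
  have hG := aux_hasDerivAt_Gamma hα
  have hpos := Real.Gamma_pos_of_pos hα
  have hlog := hG.log hpos.ne'
  have : digamma α = (∫ t in Set.Ioi (0:ℝ), Real.log t * (t ^ (α - 1) * Real.exp (-t)))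
      / Real.Gamma α := hlog.deriv
  rw [this]
  field_simp

lemma aux_scaled {c : ℝ} (hc : 0 < c) {g : ℝ → ℝ} (hg : IntegrableOn g (Set.Ioi 0)) :
    IntegrableOn (fun x => g (c * x)) (Set.Ioi 0) := by
  have h1 : Integrable ((Set.Ioi (0:ℝ)).indicator g) :=
    (integrable_indicator_iff measurableSet_Ioi).2 hg
  have h2 := (integrable_comp_mul_left_iff ((Set.Ioi (0:ℝ)).indicator g) (ne_of_gt hc)).2 h1
  have h3 : (fun x => (Set.Ioi (0:ℝ)).indicator g (c * x))
      = (Set.Ioi (0:ℝ)).indicator (fun x => g (c * x)) := by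
    ext x
    by_cases hx : x ∈ Set.Ioi (0:ℝ)
    · rw [Set.indicator_of_mem hx, Set.indicator_of_mem (by exact mul_pos hc hx)]
    · rw [Set.indicator_of_notMem hx, Set.indicator_of_notMem (by
        simp only [Set.mem_Ioi, not_lt] at hx ⊢
        exact mul_nonpos_of_nonneg_of_nonpos hc.le hx)]
  rw [h3] at h2
  exact (integrable_indicator_iff measurableSet_Ioi).1 h2

lemma aux_ae_ne_zero : ∀ᵐ θ : ℝ, θ ≠ 0 := by
  rw [ae_iff]
  simpa using measure_singleton (0:ℝ)

lemma aux_of_vanish {f : ℝ → ℝ} (h0 : ∀ θ : ℝ, θ < 0 → f θ = 0) (hf : IntegrableOn f (Set.Ioi 0)) :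
    Integrable f ∧ ∫ θ, f θ = ∫ θ in Set.Ioi (0:ℝ), f θ := by
  have hae : (Set.Ioi (0:ℝ)).indicator f =ᵐ[volume] f := by
    filter_upwards [aux_ae_ne_zero] with θ hθ
    rcases lt_or_gt_of_ne hθ with h | h
    · rw [Set.indicator_of_notMem (by simpa using not_lt.2 h.le), h0 θ h]
    · exact Set.indicator_of_mem (Set.mem_Ioi.2 h) f
  refine ⟨((integrable_indicator_iff measurableSet_Ioi).2 hf).congr hae, ?_⟩
  rw [← integral_congr_ae hae, integral_indicator measurableSet_Ioi]

lemma aux_pdf_int1 {α β : ℝ} (hα : 0 < α) (hβ : 0 < β) :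
    IntegrableOn (fun θ : ℝ => θ ^ (α - 1) * Real.exp (-(β * θ))) (Set.Ioi 0) := by
  have hg := Real.GammaIntegral_convergent hα
  have h2 := aux_scaled hβ hg
  refine (h2.const_mul (β ^ (1 - α))).congr ?_
  refine (ae_restrict_iff' measurableSet_Ioi).2 (ae_of_all _ fun θ hθ => ?_)
  have hθ' : (0:ℝ) < θ := hθ
  show β ^ (1 - α) * (Real.exp (-(β * θ)) * (β * θ) ^ (α - 1)) = θ ^ (α - 1) * Real.exp (-(β * θ))
  rw [Real.mul_rpow hβ.le hθ'.le, ← mul_assoc, mul_comm (β ^ (1-α)) (Real.exp (-(β*θ))),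
    mul_assoc, ← mul_assoc (β ^ (1-α)), ← Real.rpow_add hβ]
  ring_nf
  rw [Real.rpow_zero]
  ring

lemma aux_L1 {α β : ℝ} (hα : 0 < α) (hβ : 0 < β) :
    Integrable (gammaPDFReal α β) ∧ ∫ θ, gammaPDFReal α β θ = 1 := by
  have hΓ := Real.Gamma_pos_of_pos hα
  have hcongr : ∀ θ ∈ Set.Ioi (0:ℝ), β ^ α / Real.Gamma α * (θ ^ (α - 1) * Real.exp (-(β * θ)))
      = gammaPDFReal α β θ := by
    intro θ hθ
    rw [gammaPDFReal, if_pos (le_of_lt hθ)]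
    ring
  have hint : IntegrableOn (gammaPDFReal α β) (Set.Ioi 0) := by
    refine ((aux_pdf_int1 hα hβ).const_mul (β ^ α / Real.Gamma α)).congr ?_
    exact (ae_restrict_iff' measurableSet_Ioi).2 (ae_of_all _ hcongr)
  obtain ⟨hI, hV⟩ := aux_of_vanish (fun θ hθ => by rw [gammaPDFReal, if_neg (not_le.2 hθ)]) hint
  refine ⟨hI, ?_⟩
  rw [hV, ← setIntegral_congr_fun measurableSet_Ioi hcongr, integral_const_mul,
    integral_rpow_mul_exp_neg_mul_Ioi hα hβ]
  rw [div_rpow zero_le_one hβ.le, one_rpow]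
  field_simp

lemma aux_L2 {α β : ℝ} (hα : 0 < α) (hβ : 0 < β) :
    Integrable (fun θ => θ * gammaPDFReal α β θ) ∧
      ∫ θ, θ * gammaPDFReal α β θ = α / β := by
  have hΓ := Real.Gamma_pos_of_pos hα
  have hcongr : ∀ θ ∈ Set.Ioi (0:ℝ),
      β ^ α / Real.Gamma α * (θ ^ (α + 1 - 1) * Real.exp (-(β * θ)))
      = θ * gammaPDFReal α β θ := by
    intro θ hθ
    have hθ' : (0:ℝ) < θ := hθ
    rw [gammaPDFReal, if_pos (le_of_lt hθ')]
    rw [show α + 1 - 1 = 1 + (α - 1) by ring, Real.rpow_add hθ', Real.rpow_one]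
    ring
  have hint : IntegrableOn (fun θ => θ * gammaPDFReal α β θ) (Set.Ioi 0) := by
    refine ((aux_pdf_int1 (by linarith : (0:ℝ) < α + 1) hβ).const_mul
      (β ^ α / Real.Gamma α)).congr ?_
    exact (ae_restrict_iff' measurableSet_Ioi).2 (ae_of_all _ hcongr)
  obtain ⟨hI, hV⟩ := aux_of_vanish
    (fun θ hθ => by rw [gammaPDFReal, if_neg (not_le.2 hθ), mul_zero]) hint
  refine ⟨hI, ?_⟩
  rw [hV, ← setIntegral_congr_fun measurableSet_Ioi hcongr, integral_const_mul,
    integral_rpow_mul_exp_neg_mul_Ioi (by linarith) hβ]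
  rw [Real.Gamma_add_one hα.ne', div_rpow zero_le_one hβ.le, one_rpow,
    Real.rpow_add hβ, Real.rpow_one]
  field_simp

set_option maxHeartbeats 1000000 in
lemma aux_L3 {α β : ℝ} (hα : 0 < α) (hβ : 0 < β) :
    Integrable (fun θ => Real.log θ * gammaPDFReal α β θ) ∧
      ∫ θ, Real.log θ * gammaPDFReal α β θ = digamma α - Real.log β := by
  have hΓ := Real.Gamma_pos_of_pos hα
  have hgb : IntegrableOn
      (fun θ : ℝ => Real.log (β * θ) * ((β * θ) ^ (α - 1) * Real.exp (-(β * θ))))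
      (Set.Ioi 0) := aux_scaled hβ (aux_integrableOn_log_gamma hα)
  have hk2 := aux_pdf_int1 hα hβ
  have hcongr : ∀ θ ∈ Set.Ioi (0:ℝ),
      β ^ α / Real.Gamma α * (β ^ (1 - α) *
          (Real.log (β * θ) * ((β * θ) ^ (α - 1) * Real.exp (-(β * θ))))
        - Real.log β * (θ ^ (α - 1) * Real.exp (-(β * θ))))
      = Real.log θ * gammaPDFReal α β θ := by
    intro θ hθ
    have hθ' : (0:ℝ) < θ := hθ
    rw [gammaPDFReal, if_pos (le_of_lt hθ'), Real.log_mul hβ.ne' hθ'.ne',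
      Real.mul_rpow hβ.le hθ'.le]
    have hb : β ^ (1 - α) * β ^ (α - 1) = 1 := by
      rw [← Real.rpow_add hβ]; norm_num
    linear_combination (β ^ α / Real.Gamma α * ((Real.log β + Real.log θ) *
      (θ ^ (α - 1) * Real.exp (-(β * θ))))) * hb
  have hint : IntegrableOn (fun θ => Real.log θ * gammaPDFReal α β θ) (Set.Ioi 0) := by
    refine (((hgb.const_mul (β ^ (1 - α))).sub (hk2.const_mul (Real.log β))).const_mul
      (β ^ α / Real.Gamma α)).congr ?_
    exact (ae_restrict_iff' measurableSet_Ioi).2 (ae_of_all _ hcongr)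
  obtain ⟨hI, hV⟩ := aux_of_vanish
    (fun θ hθ => by rw [gammaPDFReal, if_neg (not_le.2 hθ), mul_zero]) hint
  refine ⟨hI, ?_⟩
  rw [hV, ← setIntegral_congr_fun measurableSet_Ioi hcongr]
  rw [integral_const_mul]
  rw [integral_sub ((hgb.const_mul (β ^ (1 - α)))) (hk2.const_mul (Real.log β)),
    integral_const_mul, integral_const_mul,
    show (fun θ : ℝ => Real.log (β * θ) * ((β * θ) ^ (α - 1) * Real.exp (-(β * θ))))
      = (fun u : ℝ => Real.log u * (u ^ (α - 1) * Real.exp (-u))) ∘ (fun θ => β * θ) from rfl]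
  have hsub := integral_comp_mul_left_Ioi
    (fun u : ℝ => Real.log u * (u ^ (α - 1) * Real.exp (-u))) 0 hβ
  rw [mul_zero] at hsub
  rw [show (∫ θ in Set.Ioi (0:ℝ),
      ((fun u : ℝ => Real.log u * (u ^ (α - 1) * Real.exp (-u))) ∘ (fun θ => β * θ)) θ)
      = ∫ x in Set.Ioi (0:ℝ), (fun u : ℝ => Real.log u * (u ^ (α - 1) * Real.exp (-u))) (β * x)
      from rfl, hsub, aux_digamma_eq hα, integral_rpow_mul_exp_neg_mul_Ioi hα hβ]
  rw [div_rpow zero_le_one hβ.le, one_rpow, smul_eq_mul]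
  have hb : β ^ α * β ^ (1 - α) = β := by
    rw [← Real.rpow_add hβ]; norm_num
  field_simp
  linear_combination (digamma α) * hb

lemma aux_gamma_ae_pos {α β : ℝ} : ∀ᵐ θ ∂(gammaMeasure α β), 0 < θ := by
  rw [ae_iff]
  have h : {θ : ℝ | ¬ 0 < θ} = Set.Iic 0 := by ext; simp
  rw [h, gammaMeasure, withDensity_apply _ measurableSet_Iic,
    lintegral_Iic_eq_lintegral_Iio_add_Icc _ le_rfl, lintegral_gammaPDF_of_nonpos le_rfl,
    zero_add, setLIntegral_measure_zero _ _ (by simp)]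

lemma aux_integral_withDensity {f : ℝ → ℝ} (hf : Measurable f) (hf0 : ∀ x, 0 ≤ f x) (g : ℝ → ℝ) :
    ∫ x, g x ∂(volume.withDensity (fun x => ENNReal.ofReal (f x))) = ∫ x, f x * g x := by
  rw [show (fun x => ENNReal.ofReal (f x)) = (fun x => ((Real.toNNReal (f x) : ℝ≥0) : ℝ≥0∞))
    from rfl, integral_withDensity_eq_integral_smul hf.real_toNNReal g]
  congr 1
  ext x
  rw [NNReal.smul_def, Real.coe_toNNReal _ (hf0 x), smul_eq_mul]

lemma aux_integrable_withDensity {f : ℝ → ℝ} (hf : Measurable f) (hf0 : ∀ x, 0 ≤ f x)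
    (g : ℝ → ℝ) :
    Integrable g (volume.withDensity (fun x => ENNReal.ofReal (f x))) ↔
      Integrable (fun x => g x * f x) volume := by
  rw [integrable_withDensity_iff hf.ennreal_ofReal (ae_of_all _ fun x => ENNReal.ofReal_lt_top)]
  exact integrable_congr (ae_of_all _ fun x => by simp [ENNReal.toReal_ofReal (hf0 x)])

set_option maxHeartbeats 1000000 in
theorem gamma_posterior_averaged_klDiv_exponential
    (αₙ βₙ : ℝ) (hα : 0 < αₙ) (hβ : 0 < βₙ)
    (Q : Measure ℝ) [IsProbabilityMeasure Q] (hQ_supp : Q (Set.Iio 0) = 0)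
    (q : ℝ → ℝ) (hq_nonneg : ∀ x, 0 ≤ q x)
    (hQ_density : Q = MeasureTheory.volume.withDensity (fun ξ => ENNReal.ofReal (q ξ)))
    (hint_entropy : Integrable (fun ξ => q ξ * Real.log (q ξ)))
    (hint_first_moment : Integrable (fun ξ => q ξ * ξ)) :
    ((∫⁻ θ, klDiv Q (expMeasure θ) ∂(gammaMeasure αₙ βₙ) : ℝ≥0∞) : EReal)
      = ((klDiv Q (expMeasure (αₙ / βₙ)) : ℝ≥0∞) : EReal)
        + ((Real.log αₙ - digamma αₙ : ℝ) : EReal) := by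
  -- measurable nonnegative version of the density
  have ham : AEMeasurable q volume := by
    have h1 : AEMeasurable (fun ξ => q ξ * ξ) volume := hint_first_moment.aemeasurable
    refine (h1.mul (measurable_inv.aemeasurable)).congr ?_
    filter_upwards [aux_ae_ne_zero] with ξ hξ
    show q ξ * ξ * ξ⁻¹ = q ξ
    field_simp
  set q₀ : ℝ → ℝ := fun ξ => max (ham.mk q ξ) 0 with hq₀def
  have hq₀m : Measurable q₀ := ham.measurable_mk.max measurable_const
  have hq₀0 : ∀ x, 0 ≤ q₀ x := fun x => le_max_right _ _
  have hq₀ae : q₀ =ᵐ[volume] q := by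
    filter_upwards [ham.ae_eq_mk] with ξ h
    show max (ham.mk q ξ) 0 = q ξ
    rw [← h]
    exact max_eq_left (hq_nonneg ξ)
  have hQ0 : Q = volume.withDensity (fun ξ => ENNReal.ofReal (q₀ ξ)) := by
    rw [hQ_density]
    exact (withDensity_congr_ae (by filter_upwards [hq₀ae] with ξ h; rw [h])).symm
  -- integrability facts for q₀
  set H := ∫ ξ, q ξ * Real.log (q ξ) with hHdef
  set M := ∫ ξ, q ξ * ξ with hMdef
  have hHq : (fun ξ => q₀ ξ * Real.log (q₀ ξ)) =ᵐ[volume] (fun ξ => q ξ * Real.log (q ξ)) := by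
    filter_upwards [hq₀ae] with ξ h; rw [h]
  have hMq : (fun ξ => q₀ ξ * ξ) =ᵐ[volume] (fun ξ => q ξ * ξ) := by
    filter_upwards [hq₀ae] with ξ h; rw [h]
  have hH_int : Integrable (fun ξ => q₀ ξ * Real.log (q₀ ξ)) volume := hint_entropy.congr hHq.symm
  have hH_val : ∫ ξ, q₀ ξ * Real.log (q₀ ξ) = H := integral_congr_ae hHq
  have hM_int : Integrable (fun ξ => q₀ ξ * ξ) volume := hint_first_moment.congr hMq.symm
  have hM_val : ∫ ξ, q₀ ξ * ξ = M := integral_congr_ae hMq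
  have hq₀_int : Integrable q₀ volume := by
    have h1 : Integrable (fun _ : ℝ => (1:ℝ)) Q := integrable_const 1
    rw [hQ0, aux_integrable_withDensity hq₀m hq₀0] at h1
    exact h1.congr (ae_of_all _ fun x => by simp)
  have hq₀_one : ∫ x, q₀ x = 1 := by
    have hQuniv : ∫⁻ x, ENNReal.ofReal (q₀ x) = 1 := by
      have h := measure_univ (μ := Q)
      rw [hQ0, withDensity_apply _ MeasurableSet.univ, Measure.restrict_univ] at h
      exact h
    rw [integral_eq_lintegral_of_nonneg_ae (ae_of_all _ hq₀0) hq₀m.aestronglyMeasurable,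
      hQuniv, ENNReal.toReal_one]
  -- support facts
  have hq₀_neg : ∀ᵐ ξ, ξ < 0 → q₀ ξ = 0 := by
    have h1 : Q (Set.Iio 0) = 0 := hQ_supp
    rw [hQ0, withDensity_apply _ measurableSet_Iio] at h1
    have h2 := (lintegral_eq_zero_iff hq₀m.ennreal_ofReal).1 h1
    rw [EventuallyEq, ae_restrict_iff' measurableSet_Iio] at h2
    filter_upwards [h2] with ξ h hξ
    have := h hξ
    simp only [Pi.zero_apply, ENNReal.ofReal_eq_zero] at this
    exact le_antisymm this (hq₀0 ξ)
  have hQ_mem : ∀ᵐ x ∂Q, 0 ≤ x := by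
    rw [ae_iff]
    have : {x : ℝ | ¬ 0 ≤ x} = Set.Iio 0 := by ext; simp [not_le]
    rw [this]; exact hQ_supp
  have hQ_pos : ∀ᵐ x ∂Q, 0 < q₀ x := by
    rw [ae_iff]
    have h1 : {x : ℝ | ¬ 0 < q₀ x} = q₀ ⁻¹' (Set.Iic 0) := by ext; simp [not_lt]
    rw [h1, hQ0, withDensity_apply _ (hq₀m measurableSet_Iic)]
    rw [setLIntegral_congr_fun (hq₀m measurableSet_Iic) (fun x hx =>
      (by exact ENNReal.ofReal_eq_zero.2 hx : ENNReal.ofReal (q₀ x) = 0))]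
    exact lintegral_zero
  -- shared volume-level computation
  have hvol : ∀ θ : ℝ,
      Integrable (fun x => q₀ x * (Real.log (q₀ x) - Real.log θ + θ * x)) volume ∧
      ∫ x, q₀ x * (Real.log (q₀ x) - Real.log θ + θ * x) = H - Real.log θ + θ * M := by
    intro θ
    have heq : (fun x => q₀ x * (Real.log (q₀ x) - Real.log θ + θ * x))
        = fun x => q₀ x * Real.log (q₀ x) - Real.log θ * q₀ x + θ * (q₀ x * x) := by
      ext x; ring
    have i2 : Integrable (fun x => Real.log θ * q₀ x) volume := hq₀_int.const_mul _
    have i1 : Integrable (fun x => q₀ x * Real.log (q₀ x) - Real.log θ * q₀ x) volume :=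
      hH_int.sub i2
    have i3 : Integrable (fun x => θ * (q₀ x * x)) volume := hM_int.const_mul θ
    constructor
    · rw [heq]
      exact i1.add i3
    · rw [heq, integral_add i1 i3, integral_sub hH_int i2, integral_const_mul, integral_const_mul,
        hH_val, hq₀_one, hM_val]
      ring
  -- KL divergence formula
  have hkl : ∀ θ : ℝ, 0 < θ →
      klDiv Q (expMeasure θ) = ENNReal.ofReal (H - Real.log θ + θ * M) := by
    intro θ hθ
    have hPprob := isProbabilityMeasure_expMeasure hθ
    set ν₀ := volume.restrict (Set.Ici (0:ℝ)) with hν₀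
    have hQres : Q.restrict (Set.Ici 0) = Q := by
      apply Measure.restrict_eq_self_of_ae_mem
      filter_upwards [hQ_mem] with x hx
      exact hx
    have hQν : Q = ν₀.withDensity (fun ξ => ENNReal.ofReal (q₀ ξ)) := by
      conv_lhs => rw [← hQres, hQ0]
      rw [restrict_withDensity measurableSet_Ici]
    have hEvol : expMeasure θ = volume.withDensity (exponentialPDF θ) := rfl
    have hEres : (expMeasure θ).restrict (Set.Ici 0) = expMeasure θ := by
      apply Measure.restrict_eq_self_of_ae_mem
      rw [ae_iff]
      have h2 : {x : ℝ | ¬ x ∈ Set.Ici (0:ℝ)} = Set.Iio 0 := by ext; simp [not_le]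
      rw [h2, hEvol, withDensity_apply _ measurableSet_Iio]
      exact lintegral_exponentialPDF_of_nonpos le_rfl
    have hEν : expMeasure θ = ν₀.withDensity (exponentialPDF θ) := by
      conv_lhs => rw [← hEres, hEvol]
      rw [restrict_withDensity measurableSet_Ici]
    have hpm : Measurable (exponentialPDF θ) := (measurable_exponentialPDFReal θ).ennreal_ofReal
    have hp_ne_zero : ∀ᵐ x ∂ν₀, exponentialPDF θ x ≠ 0 := by
      rw [hν₀, ae_restrict_iff' measurableSet_Ici]
      refine ae_of_all _ fun x hx => ?_
      rw [exponentialPDF_of_nonneg hx]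
      simp only [ne_eq, ENNReal.ofReal_eq_zero, not_le]
      positivity
    have hp_ne_top : ∀ᵐ x ∂ν₀, exponentialPDF θ x ≠ ∞ :=
      ae_of_all _ fun x => by rw [exponentialPDF]; exact ENNReal.ofReal_ne_top
    have hQν₀ac : Q ≪ ν₀ := by
      conv_lhs => rw [hQν]
      exact withDensity_absolutelyContinuous _ _
    have hν₀E : ν₀ ≪ expMeasure θ := by
      conv_rhs => rw [hEν]
      exact withDensity_absolutelyContinuous' hpm.aemeasurable hp_ne_zero
    have hQac : Q ≪ expMeasure θ := hQν₀ac.trans hν₀E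
    have hrn : Q.rnDeriv (expMeasure θ)
        =ᵐ[Q] fun x => (exponentialPDF θ x)⁻¹ * ENNReal.ofReal (q₀ x) := by
      have h1 := Measure.rnDeriv_withDensity_right Q ν₀ hpm.aemeasurable hp_ne_zero hp_ne_top
      rw [← hEν] at h1
      have h2 : Q.rnDeriv ν₀ =ᵐ[ν₀] fun ξ => ENNReal.ofReal (q₀ ξ) := by
        conv_lhs => rw [hQν]
        exact Measure.rnDeriv_withDensity ν₀ hq₀m.ennreal_ofReal
      refine hQν₀ac.ae_eq ?_
      filter_upwards [h1, h2] with x e1 e2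
      rw [e1, e2]
    have hllr : (fun x => Real.log ((Q.rnDeriv (expMeasure θ) x).toReal))
        =ᵐ[Q] fun x => Real.log (q₀ x) - Real.log θ + θ * x := by
      filter_upwards [hrn, hQ_mem, hQ_pos] with x h1 h2 h3
      have hp : (0:ℝ) < θ * Real.exp (-(θ * x)) := by positivity
      rw [h1, exponentialPDF_of_nonneg h2, ← ENNReal.ofReal_inv_of_pos hp,
        ← ENNReal.ofReal_mul (by positivity), ENNReal.toReal_ofReal
          (mul_nonneg (by positivity) (hq₀0 x)),
        show (θ * Real.exp (-(θ * x)))⁻¹ * q₀ x = q₀ x / (θ * Real.exp (-(θ * x))) by ring,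
        Real.log_div h3.ne' hp.ne', Real.log_mul hθ.ne' (Real.exp_ne_zero _), Real.log_exp]
      ring
    have hfint : Integrable (fun x => Real.log (q₀ x) - Real.log θ + θ * x) Q := by
      rw [hQ0, aux_integrable_withDensity hq₀m hq₀0]
      exact (hvol θ).1.congr (ae_of_all _ fun x => by ring)
    have hval : ∫ x, (Real.log (q₀ x) - Real.log θ + θ * x) ∂Q = H - Real.log θ + θ * M := by
      rw [hQ0, aux_integral_withDensity hq₀m hq₀0]
      exact (hvol θ).2
    rw [klDiv, if_pos ⟨hQac, hfint.congr hllr.symm⟩, integral_congr_ae hllr, hval]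
  -- Gibbs' inequality
  have hGibbs : ∀ θ : ℝ, 0 < θ → 0 ≤ H - Real.log θ + θ * M := by
    intro θ hθ
    set φ : ℝ → ℝ := fun x => q₀ x * (Real.log (q₀ x) - Real.log θ + θ * x) with hφ
    have hφ_int : Integrable φ volume := (hvol θ).1
    have hφIci : ∫ x in Set.Ici (0:ℝ), φ x = H - Real.log θ + θ * M := by
      have hIio : ∫ x in Set.Iio (0:ℝ), φ x = 0 := by
        apply integral_eq_zero_of_ae
        rw [EventuallyEq, ae_restrict_iff' measurableSet_Iio]
        filter_upwards [hq₀_neg] with x hx hx'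
        show q₀ x * _ = _
        rw [hx hx']
        simp
      have := integral_add_compl (measurableSet_Ici (a := (0:ℝ))) hφ_int
      rw [compl_Ici, hIio, add_zero] at this
      rw [this]
      exact (hvol θ).2
    have hexpIci : ∫ x in Set.Ici (0:ℝ), θ * Real.exp (-(θ * x)) = 1 := by
      rw [integral_Ici_eq_integral_Ioi, integral_const_mul]
      have h := integral_comp_mul_left_Ioi (fun u => Real.exp (-u)) 0 hθ
      rw [mul_zero] at h
      rw [show (fun x : ℝ => Real.exp (-(θ * x)))
          = fun x : ℝ => (fun u => Real.exp (-u)) (θ * x) from rfl] at *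
      rw [h, integral_exp_neg_Ioi, smul_eq_mul]
      simp only [neg_zero, Real.exp_zero, mul_one]
      field_simp
    have hq₀Ici : ∫ x in Set.Ici (0:ℝ), q₀ x = 1 := by
      have hIio : ∫ x in Set.Iio (0:ℝ), q₀ x = 0 := by
        apply integral_eq_zero_of_ae
        rw [EventuallyEq, ae_restrict_iff' measurableSet_Iio]
        filter_upwards [hq₀_neg] with x hx hx'
        exact hx hx'
      have := integral_add_compl (measurableSet_Ici (a := (0:ℝ))) hq₀_int
      rw [compl_Ici, hIio, add_zero] at this
      rw [this, hq₀_one]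
    have hexpint : IntegrableOn (fun x => θ * Real.exp (-(θ * x))) (Set.Ici 0) volume :=
      Iff.mpr integrableOn_Ici_iff_integrableOn_Ioi
        (by rw [IntegrableOn]; simpa only [neg_mul] using ((exp_neg_integrableOn_Ioi 0 hθ).const_mul θ))
    have hψ_int : IntegrableOn (fun x => q₀ x - θ * Real.exp (-(θ * x))) (Set.Ici 0) volume :=
      hq₀_int.integrableOn.sub hexpint
    have hmono : ∫ x in Set.Ici (0:ℝ), (q₀ x - θ * Real.exp (-(θ * x)))
        ≤ ∫ x in Set.Ici (0:ℝ), φ x := by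
      refine setIntegral_mono_on hψ_int hφ_int.integrableOn measurableSet_Ici ?_
      intro x hx
      rcases eq_or_lt_of_le (hq₀0 x) with h | h
      · show _ ≤ q₀ x * _
        rw [← h]
        have := Real.exp_pos (-(θ * x))
        nlinarith
      · have hp : (0:ℝ) < θ * Real.exp (-(θ * x)) := by positivity
        have hlog := Real.log_le_sub_one_of_pos (show 0 < θ * Real.exp (-(θ * x)) / q₀ x by
          positivity)
        rw [Real.log_div hp.ne' h.ne', Real.log_mul hθ.ne' (Real.exp_ne_zero _),
          Real.log_exp] at hlog
        have h2 := mul_le_mul_of_nonneg_left hlog h.le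
        have h3 : q₀ x * (θ * Real.exp (-(θ * x)) / q₀ x - 1)
            = θ * Real.exp (-(θ * x)) - q₀ x := by field_simp
        show _ ≤ q₀ x * _
        nlinarith [h2, h3]
    rw [hφIci] at hmono
    rw [integral_sub hq₀_int.integrableOn hexpint, hq₀Ici, hexpIci] at hmono
    linarith
  -- averaging over the gamma measure
  have hprob_gamma : IsProbabilityMeasure (gammaMeasure αₙ βₙ) := isProbabilityMeasure_gammaMeasure hα hβ
  have haeΓ : ∀ᵐ θ ∂(gammaMeasure αₙ βₙ), 0 < θ := aux_gamma_ae_pos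
  have hgmeq : gammaMeasure αₙ βₙ
      = volume.withDensity (fun θ => ENNReal.ofReal (gammaPDFReal αₙ βₙ θ)) := rfl
  have hpdfm := measurable_gammaPDFReal αₙ βₙ
  obtain ⟨hL1i, hL1v⟩ := aux_L1 hα hβ
  obtain ⟨hL2i, hL2v⟩ := aux_L2 hα hβ
  obtain ⟨hL3i, hL3v⟩ := aux_L3 hα hβ
  set g : ℝ → ℝ := fun θ => H - Real.log θ + θ * M with hg
  have hgsplit : ∀ c : ℝ → ℝ, (fun θ => c θ * g θ) = fun θ =>
      H * c θ - Real.log θ * c θ + M * (θ * c θ) := by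
    intro c; ext θ; rw [hg]; ring
  have hg_int : Integrable g (gammaMeasure αₙ βₙ) := by
    rw [hgmeq, aux_integrable_withDensity hpdfm (gammaPDFReal_nonneg hα hβ)]
    have heq : (fun θ => g θ * gammaPDFReal αₙ βₙ θ) = fun θ =>
        H * gammaPDFReal αₙ βₙ θ - Real.log θ * gammaPDFReal αₙ βₙ θ
          + M * (θ * gammaPDFReal αₙ βₙ θ) := by
      ext θ; rw [hg]; ring
    have j1 : Integrable (fun θ => H * gammaPDFReal αₙ βₙ θ
        - Real.log θ * gammaPDFReal αₙ βₙ θ) volume := (hL1i.const_mul H).sub hL3i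
    have j2 : Integrable (fun θ => M * (θ * gammaPDFReal αₙ βₙ θ)) volume := hL2i.const_mul M
    rw [heq]
    exact j1.add j2
  have hg_val : ∫ θ, g θ ∂(gammaMeasure αₙ βₙ)
      = H - (digamma αₙ - Real.log βₙ) + M * (αₙ / βₙ) := by
    rw [hgmeq, aux_integral_withDensity hpdfm (gammaPDFReal_nonneg hα hβ)]
    have heq : (fun θ => gammaPDFReal αₙ βₙ θ * g θ) = fun θ =>
        H * gammaPDFReal αₙ βₙ θ - Real.log θ * gammaPDFReal αₙ βₙ θ
          + M * (θ * gammaPDFReal αₙ βₙ θ) := by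
      ext θ; rw [hg]; ring
    have j1 : Integrable (fun θ => H * gammaPDFReal αₙ βₙ θ
        - Real.log θ * gammaPDFReal αₙ βₙ θ) volume := (hL1i.const_mul H).sub hL3i
    have j2 : Integrable (fun θ => M * (θ * gammaPDFReal αₙ βₙ θ)) volume := hL2i.const_mul M
    rw [heq, integral_add j1 j2, integral_sub (hL1i.const_mul H) hL3i,
      integral_const_mul, integral_const_mul, hL1v, hL3v, hL2v]
    ring
  have hg_nonneg : 0 ≤ᵐ[gammaMeasure αₙ βₙ] g := by
    filter_upwards [haeΓ] with θ hθ
    exact hGibbs θ hθ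
  have hLHS : ∫⁻ θ, klDiv Q (expMeasure θ) ∂(gammaMeasure αₙ βₙ)
      = ENNReal.ofReal (∫ θ, g θ ∂(gammaMeasure αₙ βₙ)) := by
    rw [ofReal_integral_eq_lintegral_ofReal hg_int hg_nonneg]
    exact lintegral_congr_ae (by filter_upwards [haeΓ] with θ hθ; rw [hkl θ hθ])
  have hdiv : 0 < αₙ / βₙ := div_pos hα hβ
  have hRHS : klDiv Q (expMeasure (αₙ / βₙ))
      = ENNReal.ofReal (H - Real.log (αₙ/βₙ) + (αₙ/βₙ) * M) := hkl _ hdiv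
  have hA : 0 ≤ H - Real.log (αₙ/βₙ) + (αₙ/βₙ) * M := hGibbs _ hdiv
  have hTot : 0 ≤ ∫ θ, g θ ∂(gammaMeasure αₙ βₙ) := integral_nonneg_of_ae hg_nonneg
  rw [hLHS, hRHS]
  have hsplit : ∫ θ, g θ ∂(gammaMeasure αₙ βₙ)
      = (H - Real.log (αₙ/βₙ) + (αₙ/βₙ) * M) + (Real.log αₙ - digamma αₙ) := by
    rw [hg_val, Real.log_div hα.ne' hβ.ne']
    ring
  rw [hsplit]
  rw [EReal.coe_ennreal_ofReal, EReal.coe_ennreal_ofReal,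
    max_eq_left (by rw [← hsplit]; exact hTot), max_eq_left hA]
  norm_cast
end

section
/- Let θ⋆, αₙ, βₙ > 0. Then ∫ KL(Exp(θ⋆) ‖ Exp(θ)) dGamma(αₙ, βₙ)(θ) = log θ⋆ − log(αₙ/βₙ) + αₙ/(βₙ θ⋆) − 1 + log αₙ − ψ(αₙ), where ψ is the digamma function. -/
open MeasureTheory ProbabilityTheory Real
open scoped ENNReal NNReal Classical

open Set Filter Topology

lemma gamma_deriv_aux {a : ℝ} (ha : 0 < a) :
    HasDerivAt Real.Gamma (∫ t in Ioi 0, t ^ (a - 1) * (Real.log t * Real.exp (-t))) a ∧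
    IntegrableOn (fun t : ℝ => t ^ (a - 1) * (Real.log t * Real.exp (-t))) (Ioi 0) := by
  have hre : 0 < (a : ℂ).re := by simpa using ha
  have key := mellin_hasDerivAt_of_isBigO_rpow (E := ℂ) (f := fun x : ℝ => ((rexp (-x) : ℝ) : ℂ))
      (s := (a : ℂ)) (a := a + 1) (b := 0)
      ?_ ?_ (by simpa using lt_add_one a) ?_ (by simpa using ha)
  rotate_left
  · refine (Continuous.continuousOn ?_).locallyIntegrableOn measurableSet_Ioi
    exact Complex.continuous_ofReal.comp (Real.continuous_exp.comp continuous_neg)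
  · rw [← Asymptotics.isBigO_norm_left]
    simp_rw [Complex.norm_real,
      Asymptotics.isBigO_norm_left]
    simpa only [neg_one_mul] using (isLittleO_exp_neg_mul_rpow_atTop zero_lt_one _).isBigO
  · simp_rw [neg_zero, Real.rpow_zero]
    refine Asymptotics.isBigO_const_of_tendsto (?_ : Tendsto _ _ (𝓝 (1 : ℂ))) one_ne_zero
    rw [(by simp : (1 : ℂ) = Real.exp (-0))]
    exact (Complex.continuous_ofReal.comp
      (Real.continuous_exp.comp continuous_neg)).continuousWithinAt
  obtain ⟨hconv, hderiv⟩ := key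
  -- identify the complex derivative value with the real integral
  have hD : mellin (fun t : ℝ => Real.log t • ((rexp (-t) : ℝ) : ℂ)) (a : ℂ)
      = ((∫ t in Ioi 0, t ^ (a - 1) * (Real.log t * Real.exp (-t)) : ℝ) : ℂ) := by
    rw [mellin]
    refine (setIntegral_congr_fun measurableSet_Ioi (fun t ht => ?_)).trans integral_ofReal
    simp only [smul_eq_mul]
    rw [show ((a : ℂ) - 1) = ((a - 1 : ℝ) : ℂ) by push_cast; ring,
      ← Complex.ofReal_cpow ht.le, Complex.real_smul]
    push_cast [← Complex.ofReal_exp]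
    norm_num
  constructor
  · have hG : HasDerivAt Complex.Gamma
        (((∫ t in Ioi 0, t ^ (a - 1) * (Real.log t * Real.exp (-t)) : ℝ) : ℂ)) (a : ℂ) := by
      rw [← hD]
      have heq : Complex.Gamma =ᶠ[𝓝 (a : ℂ)]
          mellin (fun x : ℝ => ((rexp (-x) : ℝ) : ℂ)) := by
        have hopen : IsOpen {z : ℂ | 0 < z.re} := isOpen_lt continuous_const Complex.continuous_re
        filter_upwards [hopen.mem_nhds hre] with z hz
        rw [← Complex.GammaIntegral_eq_mellin, Complex.Gamma_eq_integral hz]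
      exact hderiv.congr_of_eventuallyEq heq
    have := hG.real_of_complex
    rw [show Real.Gamma = fun x : ℝ => (Complex.Gamma x).re from rfl]
    simpa [Complex.ofReal_re] using this
  · have h1 : IntegrableOn (fun t : ℝ =>
        (((t ^ (a - 1) * (Real.log t * Real.exp (-t)) : ℝ)) : ℂ)) (Ioi 0) := by
      refine (hconv : IntegrableOn _ _ _).congr_fun (fun t ht => ?_) measurableSet_Ioi
      simp only [smul_eq_mul]
      rw [show ((a : ℂ) - 1) = ((a - 1 : ℝ) : ℂ) by push_cast; ring,
        ← Complex.ofReal_cpow (le_of_lt ht), Complex.real_smul]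
      push_cast [← Complex.ofReal_exp]
      ring
    have h2 := h1.re
    simp only [RCLike.re_to_complex, Complex.ofReal_re] at h2
    exact h2

lemma rpow_exp_integrableOn {a r : ℝ} (ha : 0 < a) (hr : 0 < r) :
    IntegrableOn (fun x : ℝ => x ^ (a - 1) * Real.exp (-(r * x))) (Ioi 0) := by
  have := integrableOn_rpow_mul_exp_neg_mul_rpow (s := a - 1) (p := 1) (b := r)
    (by linarith) zero_lt_one hr
  refine this.congr_fun (fun x hx => ?_) measurableSet_Ioi
  simp [Real.rpow_one, neg_mul]

lemma one_div_rpow_mul {a r : ℝ} (hr : 0 < r) : ((1:ℝ)/r) ^ a * r ^ a = 1 := by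
  rw [← Real.mul_rpow (by positivity) hr.le, one_div, inv_mul_cancel₀ hr.ne', Real.one_rpow]

lemma log_rpow_exp_key {a r : ℝ} (ha : 0 < a) (hr : 0 < r) :
    IntegrableOn (fun x : ℝ => x ^ (a - 1) * (Real.log x * Real.exp (-(r * x)))) (Ioi 0) ∧
    ∫ x in Ioi 0, x ^ (a - 1) * (Real.log x * Real.exp (-(r * x)))
      = (1 / r) ^ a * ((∫ t in Ioi 0, t ^ (a - 1) * (Real.log t * Real.exp (-t)))
          - Real.log r * Real.Gamma a) := by
  set g : ℝ → ℝ := fun t => t ^ (a - 1) * (Real.log t * Real.exp (-t)) with hg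
  have hg_int : IntegrableOn g (Ioi 0) := (gamma_deriv_aux ha).2
  have hra : (0:ℝ) < r ^ (a - 1) := Real.rpow_pos_of_pos hr _
  set c : ℝ := (r ^ (a - 1))⁻¹ with hc
  have hcomp : IntegrableOn (fun x => g (r * x)) (Ioi 0) := by
    rw [integrableOn_Ioi_comp_mul_left_iff g 0 hr, mul_zero]
    exact hg_int
  have hA : IntegrableOn (fun x : ℝ => x ^ (a - 1) * Real.exp (-(r * x))) (Ioi 0) :=
    rpow_exp_integrableOn ha hr
  have hptwise : ∀ x ∈ Ioi (0:ℝ),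
      x ^ (a - 1) * (Real.log x * Real.exp (-(r * x)))
        = c * g (r * x) - Real.log r * (x ^ (a - 1) * Real.exp (-(r * x))) := by
    intro x hx
    have hx : (0:ℝ) < x := hx
    have : g (r * x) = (r * x) ^ (a - 1) * (Real.log (r * x) * Real.exp (-(r * x))) := rfl
    rw [this, Real.mul_rpow hr.le hx.le, Real.log_mul hr.ne' hx.ne']
    have hcc : c * r ^ (a - 1) = 1 := inv_mul_cancel₀ hra.ne'
    linear_combination (-(x ^ (a - 1) * ((Real.log r + Real.log x) * Real.exp (-(r * x))))) * hcc
  have hsub : IntegrableOn (fun x : ℝ =>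
      c * g (r * x) - Real.log r * (x ^ (a - 1) * Real.exp (-(r * x)))) (Ioi 0) :=
    (hcomp.const_mul c).sub (hA.const_mul (Real.log r))
  refine ⟨hsub.congr_fun (fun x hx => (hptwise x hx).symm) measurableSet_Ioi, ?_⟩
  rw [setIntegral_congr_fun measurableSet_Ioi hptwise,
    integral_sub (hcomp.const_mul c) (hA.const_mul (Real.log r)),
    integral_const_mul, integral_const_mul,
    MeasureTheory.integral_comp_mul_left_Ioi g 0 hr, mul_zero,
    integral_rpow_mul_exp_neg_mul_Ioi ha hr]
  have hcr : c * r⁻¹ = (1/r) ^ a := by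
    rw [hc]
    rw [show a - 1 = a + (-1) by ring, Real.rpow_add hr]
    rw [Real.rpow_neg_one, one_div, Real.inv_rpow hr.le, mul_inv, inv_inv,
      mul_assoc, mul_inv_cancel₀ hr.ne', mul_one]
  rw [smul_eq_mul, ← mul_assoc, hcr, mul_sub]
  ring



lemma digamma_eq {a : ℝ} (ha : 0 < a) :
    digamma a = (∫ t in Ioi 0, t ^ (a - 1) * (Real.log t * Real.exp (-t))) / Real.Gamma a :=
  (((gamma_deriv_aux ha).1).log (Real.Gamma_pos_of_pos ha).ne').deriv

lemma ae_indicator_helper (h : ℝ → ℝ) (hzero : ∀ x < (0:ℝ), h x = 0) :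
    h =ᵐ[(volume : Measure ℝ)] (Ioi (0:ℝ)).indicator h := by
  have h0 : ∀ᵐ x : ℝ, x ≠ (0:ℝ) := by
    rw [ae_iff]
    simpa using measure_singleton (0:ℝ)
  filter_upwards [h0] with x hx
  rcases lt_trichotomy x 0 with hlt | heq | hgt
  · rw [hzero x hlt, indicator_of_notMem (by simp [hlt.not_gt] : x ∉ Ioi (0:ℝ))]
  · exact absurd heq hx
  · rw [indicator_of_mem (by simpa using hgt)]

lemma gammaPDFReal_zero_of_neg {a r x : ℝ} (hx : x < 0) : gammaPDFReal a r x = 0 := by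
  simp [gammaPDFReal, not_le.mpr hx]

lemma integral_gammaMeasure {a r : ℝ} (ha : 0 < a) (hr : 0 < r) (g : ℝ → ℝ) :
    ∫ x, g x ∂(gammaMeasure a r) = ∫ x in Ioi 0, gammaPDFReal a r x * g x := by
  have hpdf : gammaPDF a r = fun x => ((Real.toNNReal (gammaPDFReal a r x) : ℝ≥0) : ℝ≥0∞) :=
    rfl
  rw [gammaMeasure, hpdf,
    integral_withDensity_eq_integral_smul
      (measurable_gammaPDFReal a r).real_toNNReal g]
  have hpt : (fun x => Real.toNNReal (gammaPDFReal a r x) • g x)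
      = fun x => gammaPDFReal a r x * g x := by
    funext x
    rw [NNReal.smul_def, Real.coe_toNNReal _ (gammaPDFReal_nonneg ha hr x), smul_eq_mul]
  rw [hpt, integral_congr_ae (ae_indicator_helper _
    (fun x hx => by rw [gammaPDFReal_zero_of_neg hx, zero_mul])),
    integral_indicator measurableSet_Ioi]

lemma integrable_gammaMeasure_iff {a r : ℝ} (ha : 0 < a) (hr : 0 < r) (g : ℝ → ℝ) :
    Integrable g (gammaMeasure a r)
      ↔ IntegrableOn (fun x => gammaPDFReal a r x * g x) (Ioi 0) := by
  rw [gammaMeasure, show gammaPDF a r = fun x => ENNReal.ofReal (gammaPDFReal a r x) from rfl,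
    integrable_withDensity_iff (measurable_gammaPDFReal a r).ennreal_ofReal
    (Eventually.of_forall fun x => ENNReal.ofReal_lt_top)]
  have hpt : (fun x => g x * (ENNReal.ofReal (gammaPDFReal a r x)).toReal)
      = fun x => gammaPDFReal a r x * g x := by
    funext x
    rw [ENNReal.toReal_ofReal (gammaPDFReal_nonneg ha hr x), mul_comm]
  rw [hpt,
    ← integrable_indicator_iff (measurableSet_Ioi : MeasurableSet (Ioi (0:ℝ)))]
  exact integrable_congr (ae_indicator_helper _
    (fun x hx => by rw [gammaPDFReal_zero_of_neg hx, zero_mul]))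

lemma gammaPDFReal_pos_eq {a r x : ℝ} (hx : 0 < x) :
    gammaPDFReal a r x = r ^ a / Real.Gamma a * (x ^ (a-1) * Real.exp (-(r * x))) := by
  rw [gammaPDFReal, if_pos hx.le, mul_assoc]

lemma integrable_log_gammaMeasure {a r : ℝ} (ha : 0 < a) (hr : 0 < r) :
    Integrable Real.log (gammaMeasure a r) := by
  rw [integrable_gammaMeasure_iff ha hr]
  have h : IntegrableOn (fun x : ℝ =>
      (r ^ a / Real.Gamma a) * (x ^ (a-1) * (Real.log x * Real.exp (-(r * x))))) (Ioi 0) :=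
    ((log_rpow_exp_key ha hr).1).const_mul _
  refine h.congr_fun (fun x hx => ?_) measurableSet_Ioi
  rw [gammaPDFReal_pos_eq hx]
  ring

lemma integral_log_gammaMeasure {a r : ℝ} (ha : 0 < a) (hr : 0 < r) :
    ∫ x, Real.log x ∂(gammaMeasure a r) = digamma a - Real.log r := by
  rw [integral_gammaMeasure ha hr]
  have hpt : ∀ x ∈ Ioi (0:ℝ), gammaPDFReal a r x * Real.log x
      = (r ^ a / Real.Gamma a) * (x ^ (a-1) * (Real.log x * Real.exp (-(r * x)))) := by
    intro x hx
    rw [gammaPDFReal_pos_eq hx]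
    ring
  rw [setIntegral_congr_fun measurableSet_Ioi hpt, integral_const_mul,
    (log_rpow_exp_key ha hr).2, digamma_eq ha]
  have hΓ : Real.Gamma a ≠ 0 := (Real.Gamma_pos_of_pos ha).ne'
  have h1 : r ^ a / Real.Gamma a * ((1/r) ^ a * ((∫ t in Ioi 0,
        t ^ (a - 1) * (Real.log t * Real.exp (-t))) - Real.log r * Real.Gamma a))
      = ((1/r) ^ a * r ^ a) * (((∫ t in Ioi 0,
        t ^ (a - 1) * (Real.log t * Real.exp (-t))) - Real.log r * Real.Gamma a) / Real.Gamma a) := by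
    field_simp
  rw [h1, one_div_rpow_mul hr, one_mul, sub_div, mul_div_assoc,
    div_self hΓ, mul_one]

lemma integral_id_gammaMeasure {a r : ℝ} (ha : 0 < a) (hr : 0 < r) :
    ∫ x, x ∂(gammaMeasure a r) = a / r := by
  rw [integral_gammaMeasure ha hr]
  have hpt : ∀ x ∈ Ioi (0:ℝ), gammaPDFReal a r x * x
      = (r ^ a / Real.Gamma a) * (x ^ ((a+1)-1) * Real.exp (-(r * x))) := by
    intro x hx
    rw [gammaPDFReal_pos_eq hx, show a + 1 - 1 = (a - 1) + 1 by ring,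
      Real.rpow_add_one (ne_of_gt hx)]
    ring
  rw [setIntegral_congr_fun measurableSet_Ioi hpt, integral_const_mul,
    integral_rpow_mul_exp_neg_mul_Ioi (by linarith) hr,
    Real.Gamma_add_one ha.ne']
  have hΓ : Real.Gamma a ≠ 0 := (Real.Gamma_pos_of_pos ha).ne'
  have h2 : ((1:ℝ)/r) ^ (a+1) = (1/r) ^ a * (1/r) := by
    rw [Real.rpow_add_one (by positivity : (1:ℝ)/r ≠ 0)]
  rw [h2]
  have h3 := one_div_rpow_mul (a := a) hr
  calc r ^ a / Real.Gamma a * ((1/r) ^ a * (1/r) * (a * Real.Gamma a))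
      = ((1/r) ^ a * r ^ a) * ((Real.Gamma a / Real.Gamma a) * (a * (1/r))) := by ring
    _ = a / r := by rw [h3, div_self hΓ]; ring

lemma integrable_id_gammaMeasure {a r : ℝ} (ha : 0 < a) (hr : 0 < r) :
    Integrable (fun x : ℝ => x) (gammaMeasure a r) := by
  rw [integrable_gammaMeasure_iff ha hr]
  have h : IntegrableOn (fun x : ℝ =>
      (r ^ a / Real.Gamma a) * (x ^ ((a+1)-1) * Real.exp (-(r * x)))) (Ioi 0) :=
    (rpow_exp_integrableOn (by linarith : (0:ℝ) < a + 1) hr).const_mul _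
  refine h.congr_fun (fun x hx => ?_) measurableSet_Ioi
  dsimp only
  rw [gammaPDFReal_pos_eq hx, show a + 1 - 1 = (a - 1) + 1 by ring,
    Real.rpow_add_one (ne_of_gt hx)]
  ring





lemma exp_density_measurable (s t : ℝ) :
    Measurable (fun x : ℝ => ENNReal.ofReal (s / t * Real.exp (-((s - t) * x)))) :=
  (((measurable_id.const_mul (s - t)).neg.exp).const_mul (s / t)).ennreal_ofReal

lemma expMeasure_eq_withDensity {s t : ℝ} (hs : 0 < s) (ht : 0 < t) :
    expMeasure s = (expMeasure t).withDensity
      (fun x => ENNReal.ofReal (s / t * Real.exp (-((s - t) * x)))) := by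
  have hfun : (fun x => ENNReal.ofReal (gammaPDFReal 1 s x))
      = (fun x => ENNReal.ofReal (gammaPDFReal 1 t x))
        * (fun x => ENNReal.ofReal (s / t * Real.exp (-((s - t) * x)))) := by
    funext x
    rw [Pi.mul_apply]
    unfold gammaPDFReal
    split_ifs with hx
    · rw [← ENNReal.ofReal_mul (by positivity)]
      congr 1
      simp only [Real.Gamma_one, Real.rpow_one, sub_self, Real.rpow_zero, div_one, mul_one]
      rw [show -(s*x) = -(t*x) + -((s-t)*x) by ring, Real.exp_add]
      field_simp
    · simp
  rw [expMeasure, expMeasure, gammaMeasure, gammaMeasure,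
    show gammaPDF 1 s = fun x => ENNReal.ofReal (gammaPDFReal 1 s x) from rfl,
    show gammaPDF 1 t = fun x => ENNReal.ofReal (gammaPDFReal 1 t x) from rfl,
    hfun, withDensity_mul _ ((measurable_gammaPDFReal 1 t).ennreal_ofReal)
      (exp_density_measurable s t)]

lemma klDiv_exp {s t : ℝ} (hs : 0 < s) (ht : 0 < t) :
    klDiv (expMeasure s) (expMeasure t)
      = ENNReal.ofReal (Real.log s - Real.log t + t / s - 1) := by
  have hps : IsProbabilityMeasure (expMeasure s) := isProbabilityMeasure_gammaMeasure one_pos hs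
  have hpt : IsProbabilityMeasure (expMeasure t) := isProbabilityMeasure_gammaMeasure one_pos ht
  set h : ℝ → ℝ≥0∞ := fun x => ENNReal.ofReal (s / t * Real.exp (-((s - t) * x))) with hh
  have hwd := expMeasure_eq_withDensity hs ht
  have hac : expMeasure s ≪ expMeasure t := hwd ▸ withDensity_absolutelyContinuous _ _
  have hrn : (expMeasure s).rnDeriv (expMeasure t) =ᵐ[expMeasure t] h := by
    nth_rewrite 1 [hwd]
    exact Measure.rnDeriv_withDensity _ (exp_density_measurable s t)
  have hrn' : (expMeasure s).rnDeriv (expMeasure t) =ᵐ[expMeasure s] h :=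
    hrn.filter_mono hac.ae_le
  have hlog : (fun x => Real.log (((expMeasure s).rnDeriv (expMeasure t) x)).toReal)
      =ᵐ[expMeasure s] fun x => Real.log (s / t) + (-(s - t)) * x := by
    filter_upwards [hrn'] with x hx
    rw [hx, ENNReal.toReal_ofReal (by positivity),
      Real.log_mul (by positivity) (Real.exp_pos _).ne', Real.log_exp]
    ring
  have hid : Integrable (fun x : ℝ => x) (expMeasure s) := integrable_id_gammaMeasure one_pos hs
  have haff : Integrable (fun x => Real.log (s / t) + (-(s - t)) * x) (expMeasure s) :=
    (integrable_const _).add (hid.const_mul _)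
  have hint : Integrable (fun x => Real.log (((expMeasure s).rnDeriv (expMeasure t) x)).toReal)
      (expMeasure s) := haff.congr hlog.symm
  rw [klDiv, if_pos ⟨hac, hint⟩, integral_congr_ae hlog,
    integral_add (integrable_const _) (hid.const_mul _), integral_const, probReal_univ,
    integral_const_mul]
  have hmean : ∫ a : ℝ, a ∂(expMeasure s) = 1 / s := by
    rw [expMeasure, integral_id_gammaMeasure one_pos hs]
  rw [hmean]
  congr 1
  rw [smul_eq_mul, one_mul, Real.log_div hs.ne' ht.ne']
  field_simp
  ring

lemma gammaMeasure_ae_Ioi {a r : ℝ} : ∀ᵐ θ ∂(gammaMeasure a r), θ ∈ Ioi (0:ℝ) := by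
  rw [ae_iff]
  have hset : {θ : ℝ | ¬ θ ∈ Ioi (0:ℝ)} = Iic 0 := by ext θ; simp
  rw [hset, gammaMeasure, withDensity_apply _ measurableSet_Iic,
    setLIntegral_congr (Iio_ae_eq_Iic (a := (0:ℝ))).symm,
    setLIntegral_congr_fun measurableSet_Iio
      (fun x (hx : x < 0) => gammaPDF_of_neg hx),
    lintegral_zero]

theorem gamma_posterior_averaged_klDiv_exponential_wellspecified
    (θstar αₙ βₙ : ℝ) (hθ : 0 < θstar) (hα : 0 < αₙ) (hβ : 0 < βₙ) :
    ((∫⁻ θ, klDiv (expMeasure θstar) (expMeasure θ)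
        ∂(gammaMeasure αₙ βₙ) : ℝ≥0∞) : EReal)
      = ((Real.log θstar - Real.log (αₙ / βₙ) + αₙ / (βₙ * θstar) - 1
          + Real.log αₙ - digamma αₙ : ℝ) : EReal) := by
  have hprob : IsProbabilityMeasure (gammaMeasure αₙ βₙ) := isProbabilityMeasure_gammaMeasure hα hβ
  set f : ℝ → ℝ := fun θ => Real.log θstar - Real.log θ + θ / θstar - 1 with hf
  have hae : ∀ᵐ θ ∂(gammaMeasure αₙ βₙ), θ ∈ Ioi (0:ℝ) := gammaMeasure_ae_Ioi
  have h1 : ∫⁻ θ, klDiv (expMeasure θstar) (expMeasure θ) ∂(gammaMeasure αₙ βₙ)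
      = ∫⁻ θ, ENNReal.ofReal (f θ) ∂(gammaMeasure αₙ βₙ) := by
    refine lintegral_congr_ae ?_
    filter_upwards [hae] with θ hθ'
    exact klDiv_exp hθ hθ'
  have hnonneg : 0 ≤ᵐ[gammaMeasure αₙ βₙ] f := by
    filter_upwards [hae] with θ hθ'
    have hle := Real.log_le_sub_one_of_pos (div_pos hθ' hθ)
    rw [Real.log_div (ne_of_gt hθ') hθ.ne'] at hle
    simp only [hf, Pi.zero_apply]
    linarith
  have hid : Integrable (fun θ : ℝ => θstar⁻¹ * θ) (gammaMeasure αₙ βₙ) :=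
    (integrable_id_gammaMeasure hα hβ).const_mul _
  have hlogint : Integrable Real.log (gammaMeasure αₙ βₙ) := integrable_log_gammaMeasure hα hβ
  have hfeq : f = fun θ => (Real.log θstar - 1 + θstar⁻¹ * θ) - Real.log θ := by
    funext θ
    simp only [hf]
    field_simp
    ring
  have hsum : Integrable (fun θ : ℝ => Real.log θstar - 1 + θstar⁻¹ * θ)
      (gammaMeasure αₙ βₙ) := (integrable_const _).add hid
  have hint : Integrable f (gammaMeasure αₙ βₙ) := by
    rw [hfeq]
    exact hsum.sub hlogint
  have hval : ∫ θ, f θ ∂(gammaMeasure αₙ βₙ)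
      = Real.log θstar - Real.log (αₙ / βₙ) + αₙ / (βₙ * θstar) - 1
          + Real.log αₙ - digamma αₙ := by
    rw [hfeq, integral_sub hsum hlogint,
      integral_add (integrable_const _) hid, integral_const, probReal_univ,
      integral_const_mul, integral_id_gammaMeasure hα hβ,
      integral_log_gammaMeasure hα hβ, Real.log_div hα.ne' hβ.ne']
    simp only [ENNReal.toReal_one, smul_eq_mul, one_mul]
    field_simp
    ring
  have hpos : 0 ≤ ∫ θ, f θ ∂(gammaMeasure αₙ βₙ) := integral_nonneg_of_ae hnonneg
  rw [h1, ← ofReal_integral_eq_lintegral_ofReal hint hnonneg,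
    EReal.coe_ennreal_ofReal, max_eq_left hpos, hval]
end

section
/- (Donsker–Varadhan / convex conjugate of the KL divergence.) Let ν be a probability measure on a measurable space Ξ and let h : Ξ → ℝ be a bounded measurable function. Then sup over all probability measures Q on Ξ with Q ≪ ν of (∫ h dQ − KL(Q ‖ ν)) equals log ∫ exp(h) dν. -/
open MeasureTheory ProbabilityTheory Real
open scoped ENNReal NNReal Classical

section Aux

variable {α : Type*} [MeasurableSpace α]

lemma integrable_of_abs_le {μ : Measure α} [IsFiniteMeasure μ] {f : α → ℝ}
    (hf : Measurable f) {C : ℝ} (hC : ∀ x, |f x| ≤ C) : Integrable f μ :=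
  Integrable.mono' (integrable_const C) hf.aestronglyMeasurable
    (Filter.Eventually.of_forall fun x => hC x)

lemma integral_llr_nonneg' {μ ν : Measure α} [IsProbabilityMeasure μ]
    [IsProbabilityMeasure ν] (hμν : μ ≪ ν) (h_int : Integrable (llr μ ν) μ) :
    0 ≤ ∫ x, llr μ ν x ∂μ := by
  have h_pos : ∀ᵐ x ∂μ, 0 < ν.rnDeriv μ x := by
    filter_upwards [Measure.inv_rnDeriv hμν, hμν.ae_le (Measure.rnDeriv_lt_top μ ν)]
      with x hinv hlt
    rw [← hinv]
    simp [ENNReal.inv_pos, hlt.ne]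
  have key : ∀ᵐ x ∂μ, -(llr μ ν x) ≤ (ν.rnDeriv μ x).toReal - 1 := by
    filter_upwards [neg_llr hμν, h_pos, Measure.rnDeriv_lt_top ν μ] with x hneg hpos hlt
    have h1 : 0 < (ν.rnDeriv μ x).toReal := ENNReal.toReal_pos hpos.ne' hlt.ne
    have h2 : -(llr μ ν x) = Real.log ((ν.rnDeriv μ x).toReal) := by
      have := hneg; simpa [llr] using this
    rw [h2]
    exact Real.log_le_sub_one_of_pos h1
  have hint2 : Integrable (fun x => (ν.rnDeriv μ x).toReal - 1) μ :=
    Measure.integrable_toReal_rnDeriv.sub (integrable_const 1)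
  have hmono := integral_mono_ae h_int.neg hint2 key
  simp only [Pi.neg_apply] at hmono
  rw [integral_neg] at hmono
  rw [integral_sub Measure.integrable_toReal_rnDeriv (integrable_const 1)] at hmono
  have hle : ∫ x, (ν.rnDeriv μ x).toReal ∂μ ≤ 1 := by
    rw [Measure.integral_toReal_rnDeriv' (μ := ν) (ν := μ)]
    have : ν.real Set.univ = 1 := by simp
    have h0 : 0 ≤ (ν.singularPart μ).real Set.univ := ENNReal.toReal_nonneg
    linarith
  simp only [integral_const, measure_univ, ENNReal.toReal_one, smul_eq_mul, one_mul, probReal_univ] at hmono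
  linarith

lemma gibbs_ineq {ν Q : Measure α} [IsProbabilityMeasure ν] [IsProbabilityMeasure Q]
    (hQ : Q ≪ ν) {h : α → ℝ} (h_meas : Measurable h) {C : ℝ} (hC : ∀ x, |h x| ≤ C)
    (h_int : Integrable (llr Q ν) Q) :
    ∫ x, h x ∂Q - ∫ x, llr Q ν x ∂Q ≤ Real.log (∫ x, Real.exp (h x) ∂ν) := by
  have hexpν : Integrable (fun x => Real.exp (h x)) ν := by
    refine integrable_of_abs_le h_meas.exp (C := Real.exp C) fun x => ?_
    rw [abs_of_pos (Real.exp_pos _)]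
    exact Real.exp_le_exp.2 ((abs_le.1 (hC x)).2)
  have hhQ : Integrable h Q := integrable_of_abs_le h_meas hC
  have hQQ' : Q ≪ ν.tilted h := hQ.trans (absolutelyContinuous_tilted hexpν)
  have : IsProbabilityMeasure (ν.tilted h) := isProbabilityMeasure_tilted hexpν
  have h_int' : Integrable (llr Q (ν.tilted h)) Q :=
    integrable_llr_tilted_right hQ hhQ h_int hexpν
  have hnn : 0 ≤ ∫ x, llr Q (ν.tilted h) x ∂Q := integral_llr_nonneg' hQQ' h_int'
  have heq := integral_llr_tilted_right hQ hhQ hexpν h_int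
  linarith [heq ▸ hnn]

end Aux

theorem donsker_varadhan
    {Ξ : Type*} [MeasurableSpace Ξ] (ν : Measure Ξ) [IsProbabilityMeasure ν]
    (h : Ξ → ℝ) (h_meas : Measurable h) (h_bdd : ∃ C : ℝ, ∀ x, |h x| ≤ C) :
    (⨆ Q : {Q : Measure Ξ // IsProbabilityMeasure Q ∧ Q ≪ ν},
        (((∫ x, h x ∂(Q.1) : ℝ) : EReal) - ((klDiv Q.1 ν : ℝ≥0∞) : EReal)))
      = ((Real.log (∫ x, Real.exp (h x) ∂ν) : ℝ) : EReal) := by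
  obtain ⟨C, hC⟩ := h_bdd
  have hexpν : Integrable (fun x => Real.exp (h x)) ν := by
    refine integrable_of_abs_le h_meas.exp (C := Real.exp C) fun x => ?_
    rw [abs_of_pos (Real.exp_pos _)]
    exact Real.exp_le_exp.2 ((abs_le.1 (hC x)).2)
  apply le_antisymm
  · refine iSup_le ?_
    rintro ⟨Q, hQprob, hQac⟩
    haveI := hQprob
    simp only
    by_cases hint : Integrable (llr Q ν) Q
    · have hkl : klDiv Q ν = ENNReal.ofReal (∫ x, llr Q ν x ∂Q) := if_pos ⟨hQac, hint⟩
      have hnn : 0 ≤ ∫ x, llr Q ν x ∂Q := integral_llr_nonneg' hQac hint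
      rw [hkl, EReal.coe_ennreal_ofReal, max_eq_left hnn, ← EReal.coe_sub,
        EReal.coe_le_coe_iff]
      exact gibbs_ineq hQac h_meas hC hint
    · have hkl : klDiv Q ν = ⊤ := if_neg fun hcon => hint hcon.2
      rw [hkl]
      simp [sub_eq_add_neg]
  · set Qs := ν.tilted h with hQs
    haveI hprob : IsProbabilityMeasure Qs := isProbabilityMeasure_tilted hexpν
    have hac : Qs ≪ ν := tilted_absolutelyContinuous ν h
    have hllr_ae : llr Qs ν =ᵐ[ν] fun x => h x - Real.log (∫ x, Real.exp (h x) ∂ν) :=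
      log_rnDeriv_tilted_left_self hexpν
    have hllr_aeQ : llr Qs ν =ᵐ[Qs] fun x => h x - Real.log (∫ x, Real.exp (h x) ∂ν) :=
      hac.ae_le hllr_ae
    have hhQs : Integrable h Qs := integrable_of_abs_le h_meas hC
    have hint : Integrable (llr Qs ν) Qs := by
      rw [integrable_congr hllr_aeQ]
      exact hhQs.sub (integrable_const _)
    have hIeq : ∫ x, llr Qs ν x ∂Qs
        = ∫ x, h x ∂Qs - Real.log (∫ x, Real.exp (h x) ∂ν) := by
      rw [integral_congr_ae hllr_aeQ, integral_sub hhQs (integrable_const _)]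
      simp
    have hnn : 0 ≤ ∫ x, llr Qs ν x ∂Qs := integral_llr_nonneg' hac hint
    refine le_iSup_of_le ⟨Qs, hprob, hac⟩ ?_
    simp only
    have hkl : klDiv Qs ν = ENNReal.ofReal (∫ x, llr Qs ν x ∂Qs) := if_pos ⟨hac, hint⟩
    rw [hkl, EReal.coe_ennreal_ofReal, max_eq_left hnn, hIeq, ← EReal.coe_sub,
      EReal.coe_le_coe_iff]
    ring_nf
    exact le_refl _
end

section
/- (Corollary: exact dual reformulation for the Gaussian model with known variance.) Let μₙ ∈ ℝ, σ, σₙ > 0, let f : ℝ → ℝ be bounded and measurable, and let ε > σₙ²/(2σ²). Then sup over probability measures Q on ℝ satisfying ∫ KL(Q ‖ N(μ, σ²)) dN(μₙ, σₙ²)(μ) ≤ ε of ∫ f dQ equals inf over γ > 0 of γ(ε − σₙ²/(2σ²)) + γ log ∫ exp(f(ξ)/γ) dN(μₙ, σ²)(ξ). -/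
open MeasureTheory ProbabilityTheory Real
open scoped ENNReal NNReal Classical
open Filter Asymptotics
open scoped Topology

lemma tendsto_mul_exp_neg_mul_sq_atTop {b : ℝ} (hb : 0 < b) :
    Tendsto (fun x : ℝ => x * rexp (-b * x ^ 2)) atTop (nhds 0) := by
  have h := rpow_mul_exp_neg_mul_sq_isLittleO_exp_neg hb 1
  have h2 : Tendsto (fun x : ℝ => rexp (-(1/2) * x)) atTop (nhds 0) := by
    have : Tendsto (fun x : ℝ => -(1/2) * x) atTop atBot :=
      Tendsto.const_mul_atTop_of_neg (by norm_num) tendsto_id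
    exact Real.tendsto_exp_atBot.comp this
  have h3 := h.tendsto_zero_of_tendsto h2
  refine h3.congr' ?_
  filter_upwards [eventually_ge_atTop (0:ℝ)] with x hx
  rw [Real.rpow_one]

lemma tendsto_mul_exp_neg_mul_sq_atBot {b : ℝ} (hb : 0 < b) :
    Tendsto (fun x : ℝ => x * rexp (-b * x ^ 2)) atBot (nhds 0) := by
  have h := (tendsto_mul_exp_neg_mul_sq_atTop hb).comp tendsto_neg_atBot_atTop
  have h2 : Tendsto (fun x : ℝ => -(x * rexp (-b * x ^ 2))) atBot (nhds 0) := by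
    refine h.congr fun x => ?_
    simp only [Function.comp_apply]
    ring_nf
  have := h2.neg
  simpa using this

lemma tendsto_exp_neg_mul_sq_atTop {b : ℝ} (hb : 0 < b) :
    Tendsto (fun x : ℝ => rexp (-b * x ^ 2)) atTop (nhds 0) := by
  apply Real.tendsto_exp_atBot.comp
  have : Tendsto (fun x : ℝ => x ^ 2) atTop atTop := by
    simpa using tendsto_pow_atTop (n := 2) (by norm_num)
  exact Tendsto.const_mul_atTop_of_neg (by linarith) this

lemma tendsto_exp_neg_mul_sq_atBot {b : ℝ} (hb : 0 < b) :
    Tendsto (fun x : ℝ => rexp (-b * x ^ 2)) atBot (nhds 0) := by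
  have h := (tendsto_exp_neg_mul_sq_atTop hb).comp tendsto_neg_atBot_atTop
  refine h.congr fun x => ?_
  simp only [Function.comp_apply]
  ring_nf

lemma integrable_sq_mul_exp_neg_mul_sq {b : ℝ} (hb : 0 < b) :
    Integrable (fun x : ℝ => x ^ 2 * rexp (-b * x ^ 2)) := by
  have h := integrable_rpow_mul_exp_neg_mul_sq hb (s := 2) (by norm_num)
  have he : (fun x : ℝ => x ^ (2:ℝ) * rexp (-b * x ^ 2))
      = fun x : ℝ => x ^ 2 * rexp (-b * x ^ 2) := by
    funext x
    rw [show (2:ℝ) = ((2:ℕ):ℝ) by norm_num, Real.rpow_natCast]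
  rwa [he] at h

lemma integral_mul_exp_neg_mul_sq_eq_zero {b : ℝ} (hb : 0 < b) :
    ∫ x : ℝ, x * rexp (-b * x ^ 2) = 0 := by
  have hderiv : ∀ x : ℝ, HasDerivAt (fun x : ℝ => -(2*b)⁻¹ * rexp (-b * x ^ 2))
      (x * rexp (-b * x ^ 2)) x := by
    intro x
    have h1 : HasDerivAt (fun x : ℝ => -b * x ^ 2) (-b * (2 * x)) x := by
      simpa using ((hasDerivAt_pow 2 x).const_mul (-b))
    have h2 := (h1.exp).const_mul (-(2*b)⁻¹)
    refine h2.congr_deriv ?_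
    field_simp
  have h0 := integral_of_hasDerivAt_of_tendsto hderiv (integrable_mul_exp_neg_mul_sq hb)
      (((tendsto_exp_neg_mul_sq_atBot hb).const_mul (-(2*b)⁻¹)))
      (((tendsto_exp_neg_mul_sq_atTop hb).const_mul (-(2*b)⁻¹)))
  simpa using h0

lemma integral_sq_mul_exp_neg_mul_sq {b : ℝ} (hb : 0 < b) :
    ∫ x : ℝ, x ^ 2 * rexp (-b * x ^ 2) = √(π / b) / (2 * b) := by
  have hderiv : ∀ x : ℝ, HasDerivAt (fun x : ℝ => -(2*b)⁻¹ * (x * rexp (-b * x ^ 2)))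
      (x ^ 2 * rexp (-b * x ^ 2) - (2*b)⁻¹ * rexp (-b * x ^ 2)) x := by
    intro x
    have h1 : HasDerivAt (fun x : ℝ => -b * x ^ 2) (-b * (2 * x)) x := by
      simpa using ((hasDerivAt_pow 2 x).const_mul (-b))
    have h2 := ((hasDerivAt_id x).mul h1.exp).const_mul (-(2*b)⁻¹)
    refine h2.congr_deriv ?_
    simp only [id_eq]
    field_simp
    ring
  have hint : Integrable (fun x : ℝ =>
      x ^ 2 * rexp (-b * x ^ 2) - (2*b)⁻¹ * rexp (-b * x ^ 2)) :=
    (integrable_sq_mul_exp_neg_mul_sq hb).sub ((integrable_exp_neg_mul_sq hb).const_mul _)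
  have h0 := integral_of_hasDerivAt_of_tendsto hderiv hint
      (((tendsto_mul_exp_neg_mul_sq_atBot hb).const_mul (-(2*b)⁻¹)))
      (((tendsto_mul_exp_neg_mul_sq_atTop hb).const_mul (-(2*b)⁻¹)))
  rw [integral_sub (integrable_sq_mul_exp_neg_mul_sq hb)
      ((integrable_exp_neg_mul_sq hb).const_mul _)] at h0
  rw [integral_const_mul, integral_gaussian] at h0
  have : ∫ x : ℝ, x ^ 2 * rexp (-b * x ^ 2) = (2*b)⁻¹ * √(π/b) := by linarith
  rw [this]; ring

section GaussMoments

variable {c : ℝ} {w : ℝ≥0}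

lemma gaussianReal_wd (c : ℝ) (hw : w ≠ 0) : gaussianReal c w
    = (volume : Measure ℝ).withDensity (fun x => ((gaussianPDFReal c w x).toNNReal : ℝ≥0∞)) := by
  rw [gaussianReal_of_var_ne_zero c hw]; rfl

lemma integral_gaussianReal_eq (hw : w ≠ 0) (g : ℝ → ℝ) :
    ∫ x, g x ∂(gaussianReal c w) = ∫ x, gaussianPDFReal c w x * g x := by
  rw [gaussianReal_wd c hw,
    integral_withDensity_eq_integral_smul ((measurable_gaussianPDFReal c w).real_toNNReal) g]
  congr 1; funext x
  rw [NNReal.smul_def, Real.coe_toNNReal _ (gaussianPDFReal_nonneg c w x), smul_eq_mul]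

lemma integrable_gaussianReal_iff (hw : w ≠ 0) (g : ℝ → ℝ) :
    Integrable g (gaussianReal c w)
      ↔ Integrable (fun x => gaussianPDFReal c w x * g x) volume := by
  rw [gaussianReal_wd c hw,
    integrable_withDensity_iff_integrable_smul ((measurable_gaussianPDFReal c w).real_toNNReal)]
  apply integrable_congr
  refine Filter.Eventually.of_forall fun x => ?_
  show (gaussianPDFReal c w x).toNNReal • g x = _
  rw [NNReal.smul_def, Real.coe_toNNReal _ (gaussianPDFReal_nonneg c w x), smul_eq_mul]

lemma gaussianPDFReal_eq (c : ℝ) (w : ℝ≥0) (x : ℝ) :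
    gaussianPDFReal c w x = (√(2*π*w))⁻¹ * rexp (-(2*(w:ℝ))⁻¹ * (x - c)^2) := by
  rw [gaussianPDFReal]
  congr 1
  by_cases hw : (w:ℝ) = 0
  · simp [hw]
  · field_simp

lemma coe_w_pos (hw : w ≠ 0) : 0 < (w : ℝ) := by
  exact_mod_cast pos_iff_ne_zero.mpr hw

lemma integrable_id_gaussianReal (hw : w ≠ 0) :
    Integrable (fun x => x) (gaussianReal c w) := by
  rw [integrable_gaussianReal_iff hw]
  have hb : 0 < (2*(w:ℝ))⁻¹ := by
    have := coe_w_pos hw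
    positivity
  have he : (fun x => gaussianPDFReal c w x * x)
      = fun x => (√(2*π*w))⁻¹ * ((x-c) * rexp (-(2*(w:ℝ))⁻¹*(x-c)^2)
          + c * rexp (-(2*(w:ℝ))⁻¹*(x-c)^2)) := by
    funext x; rw [gaussianPDFReal_eq]; ring
  rw [he]
  exact (((integrable_mul_exp_neg_mul_sq hb).comp_sub_right c).add
    (((integrable_exp_neg_mul_sq hb).comp_sub_right c).const_mul c)).const_mul _

lemma integrable_sq_gaussianReal (hw : w ≠ 0) :
    Integrable (fun x => (x - c)^2) (gaussianReal c w) := by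
  rw [integrable_gaussianReal_iff hw]
  have hb : 0 < (2*(w:ℝ))⁻¹ := by
    have := coe_w_pos hw
    positivity
  have he : (fun x => gaussianPDFReal c w x * (x-c)^2)
      = fun x => (√(2*π*w))⁻¹ * ((x-c)^2 * rexp (-(2*(w:ℝ))⁻¹*(x-c)^2)) := by
    funext x; rw [gaussianPDFReal_eq]; ring
  rw [he]
  exact (((integrable_sq_mul_exp_neg_mul_sq hb)).comp_sub_right c).const_mul _

lemma sqrt_fac (hw : w ≠ 0) : (√(2*π*(w:ℝ)))⁻¹ * √(π / (2*(w:ℝ))⁻¹) = 1 := by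
  have hwp := coe_w_pos hw
  have h1 : π / (2*(w:ℝ))⁻¹ = 2*π*(w:ℝ) := by field_simp
  rw [h1]
  have : (0:ℝ) < 2*π*(w:ℝ) := by positivity
  exact inv_mul_cancel₀ (by positivity)

lemma integral_sub_c_gaussianReal (hw : w ≠ 0) :
    ∫ x, (x - c) ∂(gaussianReal c w) = 0 := by
  rw [integral_gaussianReal_eq hw]
  have hb : 0 < (2*(w:ℝ))⁻¹ := by
    have := coe_w_pos hw
    positivity
  have he : (fun x => gaussianPDFReal c w x * (x - c))
      = fun x => (√(2*π*w))⁻¹ * ((x-c) * rexp (-(2*(w:ℝ))⁻¹*(x-c)^2)) := by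
    funext x; rw [gaussianPDFReal_eq]; ring
  rw [he, integral_const_mul]
  have h2 : ∫ x : ℝ, (x-c) * rexp (-(2*(w:ℝ))⁻¹*(x-c)^2)
      = ∫ x : ℝ, x * rexp (-(2*(w:ℝ))⁻¹*x^2) := by
    exact integral_sub_right_eq_self (fun y => y * rexp (-(2*(w:ℝ))⁻¹*y^2)) c
  rw [h2, integral_mul_exp_neg_mul_sq_eq_zero hb, mul_zero]

lemma integral_id_gaussianReal (hw : w ≠ 0) :
    ∫ x, x ∂(gaussianReal c w) = c := by
  have h := integral_sub_c_gaussianReal (c := c) hw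
  rw [integral_sub (integrable_id_gaussianReal hw) (integrable_const c)] at h
  rw [integral_const] at h
  simp only [measure_univ, ENNReal.toReal_one, probReal_univ, one_smul, smul_eq_mul] at h
  linarith

lemma integral_sq_gaussianReal (hw : w ≠ 0) :
    ∫ x, (x - c)^2 ∂(gaussianReal c w) = (w : ℝ) := by
  rw [integral_gaussianReal_eq hw]
  have hwp := coe_w_pos hw
  have hb : 0 < (2*(w:ℝ))⁻¹ := by positivity
  have he : (fun x => gaussianPDFReal c w x * (x - c)^2)
      = fun x => (√(2*π*w))⁻¹ * ((x-c)^2 * rexp (-(2*(w:ℝ))⁻¹*(x-c)^2)) := by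
    funext x; rw [gaussianPDFReal_eq]; ring
  rw [he, integral_const_mul]
  have h2 : ∫ x : ℝ, (x-c)^2 * rexp (-(2*(w:ℝ))⁻¹*(x-c)^2)
      = ∫ x : ℝ, x^2 * rexp (-(2*(w:ℝ))⁻¹*x^2) :=
    integral_sub_right_eq_self (fun y => y^2 * rexp (-(2*(w:ℝ))⁻¹*y^2)) c
  rw [h2, integral_sq_mul_exp_neg_mul_sq hb]
  have h3 : √(π / (2*(w:ℝ))⁻¹) / (2 * (2*(w:ℝ))⁻¹) = √(π / (2*(w:ℝ))⁻¹) * (w:ℝ) := by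
    rw [div_eq_mul_inv]
    congr 1
    rw [mul_inv, inv_inv]
    field_simp
  rw [h3, ← mul_assoc, sqrt_fac hw, one_mul]

end GaussMoments

/-- Gibbs: the KL integrand has nonnegative integral. -/
lemma integral_log_rnDeriv_nonneg {Ω : Type*} [MeasurableSpace Ω] {Q R : Measure Ω}
    [IsProbabilityMeasure Q] [IsProbabilityMeasure R]
    (hQR : Q ≪ R) (hint : Integrable (fun x => Real.log (Q.rnDeriv R x).toReal) Q) :
    0 ≤ ∫ x, Real.log (Q.rnDeriv R x).toReal ∂Q := by
  have hpos : ∀ᵐ x ∂Q, 0 < Q.rnDeriv R x := Measure.rnDeriv_pos hQR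
  have hlt : ∀ᵐ x ∂Q, Q.rnDeriv R x < ⊤ :=
    (Measure.rnDeriv_lt_top Q R).filter_mono hQR.ae_le
  set r : Ω → ℝ := fun x => (Q.rnDeriv R x).toReal with hr
  have hrmeas : Measurable r := (Measure.measurable_rnDeriv Q R).ennreal_toReal
  have hmul_le : ∀ a : ℝ≥0∞, a * a⁻¹ ≤ 1 := by
    intro a
    rcases eq_or_ne a 0 with rfl | h0
    · simp
    rcases eq_or_ne a ⊤ with rfl | ht
    · simp
    · rw [ENNReal.mul_inv_cancel h0 ht]
  have hli : ∫⁻ x, (Q.rnDeriv R x)⁻¹ ∂Q ≤ 1 := by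
    rw [← lintegral_rnDeriv_mul hQR (f := fun x => (Q.rnDeriv R x)⁻¹) ((Measure.measurable_rnDeriv Q R).inv.aemeasurable)]
    calc ∫⁻ x, Q.rnDeriv R x * (Q.rnDeriv R x)⁻¹ ∂(R) ≤ ∫⁻ _, 1 ∂(R) :=
          lintegral_mono fun x => hmul_le _
      _ = 1 := by simp
  have heq : ∀ᵐ x ∂Q, ENNReal.ofReal ((r x)⁻¹) = (Q.rnDeriv R x)⁻¹ := by
    filter_upwards [hpos, hlt] with x hx hx'
    rw [hr]
    rw [← ENNReal.toReal_inv, ENNReal.ofReal_toReal]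
    simp [hx.ne']
  have hinv_nonneg : ∀ᵐ x ∂Q, 0 ≤ (r x)⁻¹ := by
    filter_upwards [hpos, hlt] with x hx hx'
    have : 0 < r x := ENNReal.toReal_pos hx.ne' hx'.ne
    positivity
  have hlint_eq : ∫⁻ x, ENNReal.ofReal ((r x)⁻¹) ∂Q = ∫⁻ x, (Q.rnDeriv R x)⁻¹ ∂Q :=
    lintegral_congr_ae heq
  have hint_inv : Integrable (fun x => (r x)⁻¹) Q := by
    refine ⟨hrmeas.inv.aestronglyMeasurable, ?_⟩
    rw [hasFiniteIntegral_iff_ofReal hinv_nonneg, hlint_eq]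
    exact lt_of_le_of_lt hli (by simp)
  have h1 : ∫ x, (r x)⁻¹ ∂Q ≤ 1 := by
    rw [integral_eq_lintegral_of_nonneg_ae hinv_nonneg hrmeas.inv.aestronglyMeasurable, hlint_eq]
    calc (∫⁻ x, (Q.rnDeriv R x)⁻¹ ∂Q).toReal ≤ (1 : ℝ≥0∞).toReal :=
          ENNReal.toReal_mono (by simp) hli
      _ = 1 := by simp
  have hptwise : ∀ᵐ x ∂Q, -Real.log (r x) ≤ (r x)⁻¹ - 1 := by
    filter_upwards [hpos, hlt] with x hx hx'
    have hrpos : 0 < r x := ENNReal.toReal_pos hx.ne' hx'.ne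
    have := Real.log_le_sub_one_of_pos (inv_pos.mpr hrpos)
    rwa [Real.log_inv] at this
  have h2 : ∫ x, -Real.log (r x) ∂Q ≤ ∫ x, ((r x)⁻¹ - 1) ∂Q :=
    integral_mono_ae hint.neg (hint_inv.sub (integrable_const 1)) hptwise
  rw [integral_neg, integral_sub hint_inv (integrable_const 1), integral_const] at h2
  simp only [measure_univ, ENNReal.toReal_one, probReal_univ, one_smul, smul_eq_mul] at h2
  linarith

/-- log of the rnDeriv of `Q` w.r.t. a withDensity of volume. -/
lemma log_rnDeriv_withDensity (Q : Measure ℝ) [SigmaFinite Q]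
    (hQ : Q ≪ (volume : Measure ℝ))
    {h : ℝ → ℝ≥0∞} (hmeas : Measurable h) (hpos : ∀ x, h x ≠ 0) (htop : ∀ x, h x ≠ ⊤) :
    (fun x => Real.log ((Q.rnDeriv ((volume : Measure ℝ).withDensity h)) x).toReal)
      =ᵐ[Q] fun x => Real.log ((Q.rnDeriv (volume : Measure ℝ) x).toReal)
        - Real.log ((h x).toReal) := by
  have h1 := Measure.rnDeriv_withDensity_right Q (volume : Measure ℝ) hmeas.aemeasurable
      (Filter.Eventually.of_forall hpos) (Filter.Eventually.of_forall htop)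
  have h2 := h1.filter_mono hQ.ae_le
  have h3 := Measure.rnDeriv_pos hQ
  have h4 := (Measure.rnDeriv_lt_top Q (volume : Measure ℝ)).filter_mono hQ.ae_le
  filter_upwards [h2, h3, h4] with x hx hxpos hxlt
  rw [hx]
  have htR : 0 < (h x).toReal := ENNReal.toReal_pos (hpos x) (htop x)
  have hrR : 0 < (Q.rnDeriv volume x).toReal := ENNReal.toReal_pos hxpos.ne' hxlt.ne
  rw [ENNReal.toReal_mul, ENNReal.toReal_inv, Real.log_mul (by positivity) hrR.ne',
    Real.log_inv]
  ring

lemma log_gaussianPDFReal (c : ℝ) {v : ℝ≥0} (hv : v ≠ 0) (x : ℝ) :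
    Real.log (gaussianPDFReal c v x) = -Real.log (√(2*π*v)) + (-(x-c)^2/(2*(v:ℝ))) := by
  have hvpos : 0 < (v:ℝ) := by exact_mod_cast pos_iff_ne_zero.mpr hv
  have hs : (0:ℝ) < √(2*π*(v:ℝ)) := Real.sqrt_pos.mpr (by positivity)
  rw [gaussianPDFReal]
  rw [Real.log_mul (by positivity) (Real.exp_ne_zero _), Real.log_exp, Real.log_inv]

lemma log_rnDeriv_gaussian (μₙ : ℝ) (v : ℝ≥0) (hv : v ≠ 0) (Q : Measure ℝ) [SigmaFinite Q]
    (hQV : Q ≪ (volume : Measure ℝ)) (c : ℝ) :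
    (fun x => Real.log ((Q.rnDeriv (gaussianReal c v)) x).toReal)
      =ᵐ[Q] fun x => Real.log ((Q.rnDeriv (volume : Measure ℝ) x).toReal)
        - Real.log (gaussianPDFReal c v x) := by
  have h := log_rnDeriv_withDensity Q hQV (measurable_gaussianPDF c v)
      (fun x => (gaussianPDF_pos c hv x).ne') (fun x => ENNReal.ofReal_ne_top)
  rw [← gaussianReal_of_var_ne_zero c hv] at h
  refine h.mono fun x hx => ?_
  simp only at hx ⊢
  rw [hx]
  congr 1
  rw [show (gaussianPDF c v x) = ENNReal.ofReal (gaussianPDFReal c v x) from rfl,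
    ENNReal.toReal_ofReal (gaussianPDFReal_nonneg c v x)]

lemma core_klDiv (μₙ : ℝ) (v : ℝ≥0) (hv : v ≠ 0) (Q : Measure ℝ) [IsProbabilityMeasure Q]
    (hQV : Q ≪ (volume : Measure ℝ))
    (hint : Integrable (fun x => Real.log ((Q.rnDeriv (gaussianReal μₙ v)) x).toReal) Q)
    (hx1 : Integrable (fun x => x) Q) (m : ℝ) :
    klDiv Q (gaussianReal m v)
      = ENNReal.ofReal ((∫ x, Real.log ((Q.rnDeriv (gaussianReal μₙ v)) x).toReal ∂Q)
          + (μₙ - m) * (2 * (∫ x, x ∂Q) - m - μₙ) / (2 * (v:ℝ)))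
      ∧ 0 ≤ (∫ x, Real.log ((Q.rnDeriv (gaussianReal μₙ v)) x).toReal ∂Q)
          + (μₙ - m) * (2 * (∫ x, x ∂Q) - m - μₙ) / (2 * (v:ℝ)) := by
  have hvpos : 0 < (v:ℝ) := by exact_mod_cast pos_iff_ne_zero.mpr hv
  set L : ℝ → ℝ := fun x => (μₙ - m) * (2*x - m - μₙ) / (2*(v:ℝ)) with hLdef
  have hLform : L = fun x => ((μₙ - m)/(v:ℝ)) * x + (μₙ-m)*(-m-μₙ)/(2*(v:ℝ)) := by
    funext x; rw [hLdef]; field_simp; ring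
  have hL_int : Integrable L Q := by
    rw [hLform]; exact (hx1.const_mul _).add (integrable_const _)
  have E12 : (fun x => Real.log ((Q.rnDeriv (gaussianReal m v)) x).toReal)
      =ᵐ[Q] fun x => Real.log ((Q.rnDeriv (gaussianReal μₙ v)) x).toReal + L x := by
    filter_upwards [log_rnDeriv_gaussian μₙ v hv Q hQV m, log_rnDeriv_gaussian μₙ v hv Q hQV μₙ]
      with x h1 h2
    rw [h1, h2, log_gaussianPDFReal _ hv, log_gaussianPDFReal _ hv, hLdef]
    field_simp
    ring
  have hint_m : Integrable (fun x => Real.log ((Q.rnDeriv (gaussianReal m v)) x).toReal) Q :=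
    (hint.add hL_int).congr E12.symm
  have hac : Q ≪ gaussianReal m v := hQV.trans (gaussianReal_absolutelyContinuous' m hv)
  have hLval : ∫ x, L x ∂Q
      = (μₙ - m) * (2 * (∫ x, x ∂Q) - m - μₙ) / (2 * (v:ℝ)) := by
    rw [hLform, integral_add (hx1.const_mul _) (integrable_const _), integral_const_mul,
      integral_const]
    simp only [measure_univ, ENNReal.toReal_one, probReal_univ, one_smul, smul_eq_mul]
    field_simp
    ring
  have val : ∫ x, Real.log ((Q.rnDeriv (gaussianReal m v)) x).toReal ∂Q
      = (∫ x, Real.log ((Q.rnDeriv (gaussianReal μₙ v)) x).toReal ∂Q)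
        + (μₙ - m) * (2 * (∫ x, x ∂Q) - m - μₙ) / (2 * (v:ℝ)) := by
    rw [integral_congr_ae E12, integral_add hint hL_int, hLval]
  constructor
  · rw [klDiv, if_pos ⟨hac, hint_m⟩, val]
  · rw [← val]
    exact integral_log_rnDeriv_nonneg hac hint_m

lemma core_lintegral (μₙ : ℝ) (v vₙ : ℝ≥0) (hv : v ≠ 0) (hvₙ : vₙ ≠ 0)
    (Q : Measure ℝ) [IsProbabilityMeasure Q]
    (hQV : Q ≪ (volume : Measure ℝ))
    (hint : Integrable (fun x => Real.log ((Q.rnDeriv (gaussianReal μₙ v)) x).toReal) Q)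
    (hx1 : Integrable (fun x => x) Q) :
    ∫⁻ m, klDiv Q (gaussianReal m v) ∂(gaussianReal μₙ vₙ)
      = ENNReal.ofReal ((∫ x, Real.log ((Q.rnDeriv (gaussianReal μₙ v)) x).toReal ∂Q)
          + (vₙ:ℝ)/(2*(v:ℝ))) := by
  have hvpos : 0 < (v:ℝ) := by exact_mod_cast pos_iff_ne_zero.mpr hv
  set K₀ := ∫ x, Real.log ((Q.rnDeriv (gaussianReal μₙ v)) x).toReal ∂Q with hK₀
  set mQ := ∫ x, x ∂Q with hmQ
  set g : ℝ → ℝ := fun m => K₀ + (μₙ - m) * (2 * mQ - m - μₙ) / (2 * (v:ℝ)) with hg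
  have hpt := fun m => core_klDiv μₙ v hv Q hQV hint hx1 m
  set c₁ : ℝ := 1/(2*(v:ℝ)) with hc₁
  set c₂ : ℝ := -(mQ - μₙ)/(v:ℝ) with hc₂
  have hgform : g = fun m => (K₀ + c₁*(m - μₙ)^2) + c₂*(m - μₙ) := by
    funext m; rw [hg, hc₁, hc₂]; field_simp; ring
  have hg_int : Integrable g (gaussianReal μₙ vₙ) := by
    rw [hgform]
    exact (((integrable_const K₀).add ((integrable_sq_gaussianReal hvₙ).const_mul c₁))).add
      (((integrable_id_gaussianReal hvₙ).sub (integrable_const μₙ)).const_mul c₂)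
  have hlint : ∫⁻ m, klDiv Q (gaussianReal m v) ∂(gaussianReal μₙ vₙ)
      = ∫⁻ m, ENNReal.ofReal (g m) ∂(gaussianReal μₙ vₙ) :=
    lintegral_congr fun m => (hpt m).1
  rw [hlint, ← ofReal_integral_eq_lintegral_ofReal hg_int
      (Filter.Eventually.of_forall fun m => (hpt m).2)]
  congr 1
  rw [hgform]
  have h1 : ∫ m, (m - μₙ)^2 ∂(gaussianReal μₙ vₙ) = (vₙ:ℝ) := integral_sq_gaussianReal hvₙ
  have h2 : ∫ m, (m - μₙ) ∂(gaussianReal μₙ vₙ) = 0 := integral_sub_c_gaussianReal hvₙ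
  have i1 : Integrable (fun m => (m - μₙ)^2) (gaussianReal μₙ vₙ) := integrable_sq_gaussianReal hvₙ
  have i2 : Integrable (fun m => m - μₙ) (gaussianReal μₙ vₙ) :=
    (integrable_id_gaussianReal hvₙ).sub (integrable_const μₙ)
  have ia : Integrable (fun m => K₀ + c₁*(m - μₙ)^2) (gaussianReal μₙ vₙ) :=
    (integrable_const K₀).add (i1.const_mul c₁)
  have ib : Integrable (fun m => c₂*(m - μₙ)) (gaussianReal μₙ vₙ) := i2.const_mul c₂
  rw [integral_add ia ib, integral_add (integrable_const K₀) (i1.const_mul c₁), integral_const,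
    integral_const_mul, integral_const_mul, h1, h2]
  simp only [measure_univ, ENNReal.toReal_one, probReal_univ, one_smul, smul_eq_mul, mul_zero, add_zero]
  rw [hc₁]; ring

lemma integrable_of_bounded' {μ : Measure ℝ} [IsFiniteMeasure μ] {g : ℝ → ℝ} {D : ℝ}
    (hg : Measurable g) (hD : ∀ x, |g x| ≤ D) : Integrable g μ :=
  ⟨hg.aestronglyMeasurable, HasFiniteIntegral.of_bounded
    (C := D) (Filter.Eventually.of_forall fun x => by simpa [Real.norm_eq_abs] using hD x)⟩

section Tilted

variable (μₙ : ℝ) (v : ℝ≥0) (f : ℝ → ℝ) (γ : ℝ)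

noncomputable def droA : ℝ := ∫ x, rexp (f x / γ) ∂(gaussianReal μₙ v)
noncomputable def droB : ℝ := ∫ x, f x * rexp (f x / γ) ∂(gaussianReal μₙ v)
noncomputable def droK : ℝ := droB μₙ v f γ / droA μₙ v f γ / γ - Real.log (droA μₙ v f γ)
noncomputable def droQ : Measure ℝ :=
  (gaussianReal μₙ v).withDensity (fun x => ENNReal.ofReal (rexp (f x / γ) / droA μₙ v f γ))

variable {μₙ : ℝ} {v : ℝ≥0} {f : ℝ → ℝ} {γ C : ℝ}

lemma dro_exp_int (hf : Measurable f) (hC : ∀ x, |f x| ≤ C) (hγ : 0 < γ) :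
    Integrable (fun x => rexp (f x / γ)) (gaussianReal μₙ v) := by
  refine integrable_of_bounded' (hf.div_const γ).exp (D := rexp (C / γ)) fun x => ?_
  rw [abs_of_pos (Real.exp_pos _)]
  apply Real.exp_le_exp.mpr
  gcongr
  exact le_trans (le_abs_self _) (hC x)

lemma dro_A_lb (hf : Measurable f) (hC : ∀ x, |f x| ≤ C) (hγ : 0 < γ) :
    rexp (-(C / γ)) ≤ droA μₙ v f γ := by
  rw [droA, show rexp (-(C/γ)) = ∫ _x, rexp (-(C/γ)) ∂(gaussianReal μₙ v) by
    rw [integral_const]; simp]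
  refine integral_mono (integrable_const _) (dro_exp_int hf hC hγ) fun x => ?_
  apply Real.exp_le_exp.mpr
  rw [← neg_div]
  gcongr
  exact neg_le_of_abs_le (hC x)

lemma dro_A_ub (hf : Measurable f) (hC : ∀ x, |f x| ≤ C) (hγ : 0 < γ) :
    droA μₙ v f γ ≤ rexp (C / γ) := by
  rw [droA, show rexp (C/γ) = ∫ _x, rexp (C/γ) ∂(gaussianReal μₙ v) by
    rw [integral_const]; simp]
  refine integral_mono (dro_exp_int hf hC hγ) (integrable_const _) fun x => ?_
  apply Real.exp_le_exp.mpr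
  gcongr
  exact le_trans (le_abs_self _) (hC x)

lemma dro_A_pos (hf : Measurable f) (hC : ∀ x, |f x| ≤ C) (hγ : 0 < γ) :
    0 < droA μₙ v f γ :=
  lt_of_lt_of_le (Real.exp_pos _) (dro_A_lb hf hC hγ)

lemma dro_fe_int (hf : Measurable f) (hC : ∀ x, |f x| ≤ C) (hC0 : 0 ≤ C) (hγ : 0 < γ) :
    Integrable (fun x => f x * rexp (f x / γ)) (gaussianReal μₙ v) := by
  refine integrable_of_bounded' (hf.mul (hf.div_const γ).exp) (D := C * rexp (C / γ))
    fun x => ?_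
  rw [abs_mul, abs_of_pos (Real.exp_pos _)]
  have h1 : rexp (f x / γ) ≤ rexp (C / γ) := by
    apply Real.exp_le_exp.mpr; gcongr; exact le_trans (le_abs_self _) (hC x)
  exact mul_le_mul (hC x) h1 (le_of_lt (Real.exp_pos _)) hC0

lemma dro_rho_pos (hf : Measurable f) (hC : ∀ x, |f x| ≤ C) (hγ : 0 < γ) (x : ℝ) :
    0 < rexp (f x / γ) / droA μₙ v f γ :=
  div_pos (Real.exp_pos _) (dro_A_pos hf hC hγ)

lemma dro_rho_int (hf : Measurable f) (hC : ∀ x, |f x| ≤ C) (hγ : 0 < γ) :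
    Integrable (fun x => rexp (f x / γ) / droA μₙ v f γ) (gaussianReal μₙ v) :=
  (dro_exp_int hf hC hγ).div_const _

lemma dro_Q_prob (hf : Measurable f) (hC : ∀ x, |f x| ≤ C) (hγ : 0 < γ) :
    IsProbabilityMeasure (droQ μₙ v f γ) := by
  constructor
  rw [droQ, withDensity_apply _ MeasurableSet.univ, Measure.restrict_univ,
    ← ofReal_integral_eq_lintegral_ofReal (dro_rho_int hf hC hγ)
      (Filter.Eventually.of_forall fun x => le_of_lt (dro_rho_pos hf hC hγ x))]
  rw [integral_div]
  rw [show (∫ x, rexp (f x / γ) ∂(gaussianReal μₙ v)) = droA μₙ v f γ from rfl]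
  rw [div_self (dro_A_pos hf hC hγ).ne']
  simp

lemma dro_Q_eq_wd (hv : v ≠ 0) (hf : Measurable f) :
    droQ μₙ v f γ = (volume : Measure ℝ).withDensity
      (fun x => gaussianPDF μₙ v x * ENNReal.ofReal (rexp (f x / γ) / droA μₙ v f γ)) := by
  rw [droQ, gaussianReal_of_var_ne_zero _ hv,
    ← withDensity_mul _ (measurable_gaussianPDF μₙ v)
      (((hf.div_const γ).exp.div_const _).ennreal_ofReal)]
  rfl

lemma dro_Q_ac (hv : v ≠ 0) (hf : Measurable f) : droQ μₙ v f γ ≪ (volume : Measure ℝ) := by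
  rw [dro_Q_eq_wd hv hf]
  exact withDensity_absolutelyContinuous _ _

lemma dro_integrable (hf : Measurable f) (hC : ∀ x, |f x| ≤ C) (hγ : 0 < γ)
    {g : ℝ → ℝ} (hg : Integrable g (gaussianReal μₙ v)) :
    Integrable g (droQ μₙ v f γ) := by
  rw [droQ]
  rw [show (fun x => ENNReal.ofReal (rexp (f x / γ) / droA μₙ v f γ))
      = (fun x => (((rexp (f x / γ) / droA μₙ v f γ).toNNReal : ℝ≥0) : ℝ≥0∞)) from rfl]
  rw [integrable_withDensity_iff_integrable_smul
    (((hf.div_const γ).exp.div_const _).real_toNNReal)]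
  set D := rexp (C / γ) / droA μₙ v f γ with hD
  have hD0 : 0 ≤ D := le_of_lt (div_pos (Real.exp_pos _) (dro_A_pos hf hC hγ))
  refine (hg.const_mul D).mono
    ((((hf.div_const γ).exp.div_const _).real_toNNReal).aestronglyMeasurable.smul
      hg.aestronglyMeasurable) ?_
  refine Filter.Eventually.of_forall fun x => ?_
  rw [NNReal.smul_def, smul_eq_mul, Real.coe_toNNReal _ (le_of_lt (dro_rho_pos hf hC hγ x))]
  rw [Real.norm_eq_abs, Real.norm_eq_abs, abs_mul, abs_mul,
    abs_of_pos (dro_rho_pos hf hC hγ x), abs_of_nonneg hD0]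
  apply mul_le_mul_of_nonneg_right _ (abs_nonneg _)
  rw [hD]
  gcongr
  · exact le_of_lt (dro_A_pos hf hC hγ)
  · exact le_trans (le_abs_self _) (hC x)

lemma dro_integral (hf : Measurable f) (hC : ∀ x, |f x| ≤ C) (hγ : 0 < γ) (g : ℝ → ℝ) :
    ∫ x, g x ∂(droQ μₙ v f γ)
      = ∫ x, (rexp (f x / γ) / droA μₙ v f γ) * g x ∂(gaussianReal μₙ v) := by
  rw [droQ]
  rw [show (fun x => ENNReal.ofReal (rexp (f x / γ) / droA μₙ v f γ))
      = (fun x => (((rexp (f x / γ) / droA μₙ v f γ).toNNReal : ℝ≥0) : ℝ≥0∞)) from rfl]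
  rw [integral_withDensity_eq_integral_smul (((hf.div_const γ).exp.div_const _).real_toNNReal) g]
  congr 1; funext x
  rw [NNReal.smul_def, smul_eq_mul, Real.coe_toNNReal _ (le_of_lt (dro_rho_pos hf hC hγ x))]

lemma dro_value (hf : Measurable f) (hC : ∀ x, |f x| ≤ C) (hγ : 0 < γ) :
    ∫ x, f x ∂(droQ μₙ v f γ) = droB μₙ v f γ / droA μₙ v f γ := by
  rw [dro_integral hf hC hγ f]
  rw [show (fun x => (rexp (f x / γ) / droA μₙ v f γ) * f x)
      = (fun x => (f x * rexp (f x / γ)) / droA μₙ v f γ) from funext fun x => by ring]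
  rw [integral_div]
  rfl

lemma dro_log_rho (hf : Measurable f) (hC : ∀ x, |f x| ≤ C) (hγ : 0 < γ) (x : ℝ) :
    Real.log (rexp (f x / γ) / droA μₙ v f γ) = f x / γ - Real.log (droA μₙ v f γ) := by
  rw [Real.log_div (Real.exp_ne_zero _) (dro_A_pos hf hC hγ).ne', Real.log_exp]

lemma dro_log_rn (hv : v ≠ 0) (hf : Measurable f) (hC : ∀ x, |f x| ≤ C) (hγ : 0 < γ) :
    (fun x => Real.log (((droQ μₙ v f γ).rnDeriv (gaussianReal μₙ v)) x).toReal)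
      =ᵐ[droQ μₙ v f γ] fun x => f x / γ - Real.log (droA μₙ v f γ) := by
  haveI := dro_Q_prob (μₙ := μₙ) (v := v) hf hC hγ
  have h1 := log_rnDeriv_withDensity (droQ μₙ v f γ) (dro_Q_ac hv hf)
    (measurable_gaussianPDF μₙ v) (fun x => (gaussianPDF_pos _ hv x).ne')
    (fun x => ENNReal.ofReal_ne_top)
  rw [← gaussianReal_of_var_ne_zero μₙ hv] at h1
  have h2 : (droQ μₙ v f γ).rnDeriv (volume : Measure ℝ)
      =ᵐ[volume] fun x => gaussianPDF μₙ v x * ENNReal.ofReal (rexp (f x / γ) / droA μₙ v f γ) := by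
    rw [dro_Q_eq_wd hv hf]
    exact Measure.rnDeriv_withDensity volume
      ((measurable_gaussianPDF μₙ v).mul ((hf.div_const γ).exp.div_const _).ennreal_ofReal)
  have h2' := h2.filter_mono (dro_Q_ac (μₙ := μₙ) (γ := γ) hv hf).ae_le
  filter_upwards [h1, h2'] with x hx1 hx2
  beta_reduce at hx1 ⊢
  rw [hx1, hx2, ENNReal.toReal_mul,
    show (gaussianPDF μₙ v x).toReal = gaussianPDFReal μₙ v x from
      ENNReal.toReal_ofReal (gaussianPDFReal_nonneg μₙ v x),
    ENNReal.toReal_ofReal (le_of_lt (dro_rho_pos hf hC hγ x)),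
    Real.log_mul (gaussianPDFReal_pos μₙ v x hv).ne' (dro_rho_pos hf hC hγ x).ne',
    dro_log_rho hf hC hγ x]
  ring

lemma dro_int_log (hv : v ≠ 0) (hf : Measurable f) (hC : ∀ x, |f x| ≤ C) (hC0 : 0 ≤ C)
    (hγ : 0 < γ) :
    Integrable (fun x => Real.log (((droQ μₙ v f γ).rnDeriv (gaussianReal μₙ v)) x).toReal)
      (droQ μₙ v f γ) := by
  haveI := dro_Q_prob (μₙ := μₙ) (v := v) hf hC hγ
  refine (integrable_of_bounded' (μ := droQ μₙ v f γ)
    ((hf.div_const γ).sub measurable_const) (D := C/γ + |Real.log (droA μₙ v f γ)|)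
    fun x => ?_).congr (dro_log_rn hv hf hC hγ).symm
  refine le_trans (abs_sub _ _) ?_
  gcongr
  rw [abs_div, abs_of_pos hγ]
  gcongr
  exact hC x

lemma dro_K_val (hv : v ≠ 0) (hf : Measurable f) (hC : ∀ x, |f x| ≤ C) (hC0 : 0 ≤ C)
    (hγ : 0 < γ) :
    ∫ x, Real.log (((droQ μₙ v f γ).rnDeriv (gaussianReal μₙ v)) x).toReal ∂(droQ μₙ v f γ)
      = droK μₙ v f γ := by
  haveI := dro_Q_prob (μₙ := μₙ) (v := v) hf hC hγ
  rw [integral_congr_ae (dro_log_rn hv hf hC hγ)]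
  have hint_f : Integrable f (droQ μₙ v f γ) :=
    dro_integrable hf hC hγ (integrable_of_bounded' hf hC)
  rw [integral_sub (hint_f.div_const γ) (integrable_const _), integral_div, integral_const]
  simp only [measure_univ, ENNReal.toReal_one, probReal_univ, one_smul, smul_eq_mul, one_mul]
  rw [dro_value hf hC hγ, droK]

lemma dro_K_nonneg (hv : v ≠ 0) (hf : Measurable f) (hC : ∀ x, |f x| ≤ C) (hC0 : 0 ≤ C)
    (hγ : 0 < γ) : 0 ≤ droK μₙ v f γ := by
  haveI := dro_Q_prob (μₙ := μₙ) (v := v) hf hC hγ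
  rw [← dro_K_val hv hf hC hC0 hγ]
  exact integral_log_rnDeriv_nonneg (withDensity_absolutelyContinuous _ _)
    (dro_int_log hv hf hC hC0 hγ)

lemma dro_lintegral {vₙ : ℝ≥0} (hv : v ≠ 0) (hvₙ : vₙ ≠ 0) (hf : Measurable f)
    (hC : ∀ x, |f x| ≤ C) (hC0 : 0 ≤ C) (hγ : 0 < γ) :
    ∫⁻ m, klDiv (droQ μₙ v f γ) (gaussianReal m v) ∂(gaussianReal μₙ vₙ)
      = ENNReal.ofReal (droK μₙ v f γ + (vₙ:ℝ)/(2*(v:ℝ))) := by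
  haveI := dro_Q_prob (μₙ := μₙ) (v := v) hf hC hγ
  rw [core_lintegral μₙ v vₙ hv hvₙ _ (dro_Q_ac hv hf) (dro_int_log hv hf hC hC0 hγ)
    (dro_integrable hf hC hγ (integrable_id_gaussianReal hv)),
    dro_K_val hv hf hC hC0 hγ]

end Tilted

section Cont

variable {μₙ : ℝ} {v : ℝ≥0} {f : ℝ → ℝ} {γ₀ C : ℝ}

lemma dro_A_cont (hf : Measurable f) (hC : ∀ x, |f x| ≤ C) (hC0 : 0 ≤ C) (hγ₀ : 0 < γ₀) :
    ContinuousAt (fun γ => droA μₙ v f γ) γ₀ := by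
  have hhalf : 0 < γ₀ / 2 := by linarith
  refine continuousAt_of_dominated (bound := fun _ => rexp (C / (γ₀/2))) ?_ ?_ ?_ ?_
  · exact Filter.Eventually.of_forall fun γ =>
      ((hf.div_const γ).exp).aestronglyMeasurable
  · have hmem : Set.Ioi (γ₀/2) ∈ 𝓝 γ₀ := Ioi_mem_nhds (by linarith)
    filter_upwards [hmem] with γ hγ
    refine Filter.Eventually.of_forall fun x => ?_
    rw [Real.norm_eq_abs, abs_of_pos (Real.exp_pos _)]
    apply Real.exp_le_exp.mpr
    calc f x / γ ≤ C / γ := by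
          gcongr
          · exact le_of_lt (lt_trans hhalf hγ)
          · exact le_trans (le_abs_self _) (hC x)
      _ ≤ C / (γ₀/2) := by
          gcongr
          exact le_of_lt hγ
  · exact integrable_const _
  · exact Filter.Eventually.of_forall fun x =>
      (Real.continuous_exp.continuousAt).comp
        ((continuousAt_const.div continuousAt_id hγ₀.ne'))

lemma dro_B_cont (hf : Measurable f) (hC : ∀ x, |f x| ≤ C) (hC0 : 0 ≤ C) (hγ₀ : 0 < γ₀) :
    ContinuousAt (fun γ => droB μₙ v f γ) γ₀ := by
  have hhalf : 0 < γ₀ / 2 := by linarith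
  refine continuousAt_of_dominated (bound := fun _ => C * rexp (C / (γ₀/2))) ?_ ?_ ?_ ?_
  · exact Filter.Eventually.of_forall fun γ =>
      (hf.mul ((hf.div_const γ).exp)).aestronglyMeasurable
  · have hmem : Set.Ioi (γ₀/2) ∈ 𝓝 γ₀ := Ioi_mem_nhds (by linarith)
    filter_upwards [hmem] with γ hγ
    refine Filter.Eventually.of_forall fun x => ?_
    rw [Real.norm_eq_abs, abs_mul, abs_of_pos (Real.exp_pos _)]
    have h1 : rexp (f x / γ) ≤ rexp (C / (γ₀/2)) := by
      apply Real.exp_le_exp.mpr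
      calc f x / γ ≤ C / γ := by
            gcongr
            · exact le_of_lt (lt_trans hhalf hγ)
            · exact le_trans (le_abs_self _) (hC x)
        _ ≤ C / (γ₀/2) := by gcongr; exact le_of_lt hγ
    exact mul_le_mul (hC x) h1 (le_of_lt (Real.exp_pos _)) hC0
  · exact integrable_const _
  · refine Filter.Eventually.of_forall fun x => ?_
    exact continuousAt_const.mul ((Real.continuous_exp.continuousAt).comp
      ((continuousAt_const.div continuousAt_id hγ₀.ne')))

lemma dro_K_cont (hf : Measurable f) (hC : ∀ x, |f x| ≤ C) (hC0 : 0 ≤ C) (hγ₀ : 0 < γ₀) :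
    ContinuousAt (fun γ => droK μₙ v f γ) γ₀ := by
  have hA := dro_A_pos (μₙ := μₙ) (v := v) hf hC hγ₀
  have h1 : ContinuousAt (fun γ => droB μₙ v f γ / droA μₙ v f γ / γ) γ₀ :=
    ((dro_B_cont hf hC hC0 hγ₀).div (dro_A_cont hf hC hC0 hγ₀) hA.ne').div
      continuousAt_id hγ₀.ne'
  have h2 : ContinuousAt (fun γ => Real.log (droA μₙ v f γ)) γ₀ :=
    (Real.continuousAt_log hA.ne').comp (dro_A_cont hf hC hC0 hγ₀)
  exact h1.sub h2

lemma dro_B_le (hf : Measurable f) (hC : ∀ x, |f x| ≤ C) (hC0 : 0 ≤ C) (hγ : 0 < γ₀) :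
    droB μₙ v f γ₀ ≤ C * droA μₙ v f γ₀ := by
  rw [droB, droA, ← integral_const_mul]
  refine integral_mono (dro_fe_int hf hC hC0 hγ) ((dro_exp_int hf hC hγ).const_mul C)
    fun x => ?_
  exact mul_le_mul_of_nonneg_right (le_trans (le_abs_self _) (hC x)) (le_of_lt (Real.exp_pos _))

lemma dro_K_le (hf : Measurable f) (hC : ∀ x, |f x| ≤ C) (hC0 : 0 ≤ C) (hγ : 0 < γ₀) :
    droK μₙ v f γ₀ ≤ 2 * C / γ₀ := by
  have hA := dro_A_pos (μₙ := μₙ) (v := v) hf hC hγ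
  have h1 : droB μₙ v f γ₀ / droA μₙ v f γ₀ ≤ C :=
    (div_le_iff₀ hA).mpr (dro_B_le hf hC hC0 hγ)
  have h2 : droB μₙ v f γ₀ / droA μₙ v f γ₀ / γ₀ ≤ C / γ₀ := by gcongr
  have h3 : -Real.log (droA μₙ v f γ₀) ≤ C / γ₀ := by
    have := Real.log_le_log (Real.exp_pos _) (dro_A_lb (μₙ := μₙ) (v := v) hf hC hγ)
    rw [Real.log_exp] at this
    linarith
  rw [droK]
  have : 2 * C / γ₀ = C / γ₀ + C / γ₀ := by ring
  linarith

end Cont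

/-- From the finite constraint, extract regularity of `Q` and the value bound. -/
lemma dro_feasible_K (μₙ : ℝ) (v vₙ : ℝ≥0) (hv : v ≠ 0) (hvₙ : vₙ ≠ 0)
    {ε : ℝ} (hε : 0 ≤ ε) (Q : Measure ℝ) [IsProbabilityMeasure Q]
    (hcon : ∫⁻ m, klDiv Q (gaussianReal m v) ∂(gaussianReal μₙ vₙ) ≤ ENNReal.ofReal ε) :
    ∃ _hQV : Q ≪ (volume : Measure ℝ),
    ∃ _hint : Integrable (fun x => Real.log ((Q.rnDeriv (gaussianReal μₙ v)) x).toReal) Q,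
    Integrable (fun x => x) Q ∧
    (∫ x, Real.log ((Q.rnDeriv (gaussianReal μₙ v)) x).toReal ∂Q) + (vₙ:ℝ)/(2*(v:ℝ)) ≤ ε := by
  have hvpos : 0 < (v:ℝ) := by exact_mod_cast pos_iff_ne_zero.mpr hv
  set ν := gaussianReal μₙ vₙ with hν
  set G : Set ℝ := {m | Q ≪ gaussianReal m v ∧
    Integrable (fun x => Real.log ((Q.rnDeriv (gaussianReal m v)) x).toReal) Q} with hG
  have htop : ∀ m, m ∉ G → klDiv Q (gaussianReal m v) = ⊤ := by
    intro m hm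
    rw [klDiv, if_neg]
    simpa [hG, Set.mem_setOf_eq] using hm
  have hbig : ∀ s : Set ℝ, MeasurableSet s → (∀ m ∈ s, m ∉ G) → ν s = 1 → False := by
    intro s hs hsub hν1
    have h2 : ∫⁻ m in s, klDiv Q (gaussianReal m v) ∂ν = ∫⁻ _m in s, ⊤ ∂ν := by
      refine setLIntegral_congr_fun hs (fun m hm => ?_)
      exact htop m (hsub m hm)
    have h1 : ∫⁻ m in s, klDiv Q (gaussianReal m v) ∂ν
        ≤ ∫⁻ m, klDiv Q (gaussianReal m v) ∂ν := setLIntegral_le_lintegral s _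
    rw [h2, setLIntegral_const, hν1, mul_one] at h1
    have := le_trans h1 hcon
    simp at this
  have hsing : ∀ a : ℝ, ν {a} = 0 := fun a =>
    (gaussianReal_absolutelyContinuous μₙ hvₙ) Real.volume_singleton
  have hex2 : ∃ m₁, m₁ ∈ G ∧ ∃ m₂, m₂ ∈ G ∧ m₁ ≠ m₂ := by
    by_contra hno
    push_neg at hno
    rcases Set.eq_empty_or_nonempty G with hGe | ⟨a, ha⟩
    · exact hbig Set.univ MeasurableSet.univ (fun m _ => by simp [hGe]) (by simp [hν])
    · refine hbig {a}ᶜ (measurableSet_singleton a).compl (fun m hm hmG => hm ?_) ?_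
      · exact Set.mem_singleton_iff.mpr (hno m hmG a ha)
      · rw [prob_compl_eq_one_sub (measurableSet_singleton a), hsing a]
        simp
  obtain ⟨m₁, hm₁, m₂, hm₂, hne⟩ := hex2
  have hQV : Q ≪ (volume : Measure ℝ) :=
    hm₁.1.trans (gaussianReal_absolutelyContinuous m₁ hv)
  -- first moment
  have hdiff : (fun x => Real.log ((Q.rnDeriv (gaussianReal m₁ v)) x).toReal
      - Real.log ((Q.rnDeriv (gaussianReal m₂ v)) x).toReal)
      =ᵐ[Q] fun x => ((m₂ - m₁)/(v:ℝ)) * x + ((m₁^2 - m₂^2)/(2*(v:ℝ))) := by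
    filter_upwards [log_rnDeriv_gaussian μₙ v hv Q hQV m₁, log_rnDeriv_gaussian μₙ v hv Q hQV m₂]
      with x h1 h2
    rw [h1, h2, log_gaussianPDFReal _ hv, log_gaussianPDFReal _ hv]
    field_simp
    ring
  have hLm : Integrable (fun x => ((m₂ - m₁)/(v:ℝ)) * x + ((m₁^2 - m₂^2)/(2*(v:ℝ)))) Q :=
    (hm₁.2.sub hm₂.2).congr hdiff
  have hslope : (m₂ - m₁)/(v:ℝ) ≠ 0 :=
    div_ne_zero (sub_ne_zero.mpr hne.symm) hvpos.ne'
  have hx1 : Integrable (fun x => x) Q := by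
    have h := (hLm.sub (integrable_const ((m₁^2 - m₂^2)/(2*(v:ℝ))))).const_mul
      (((m₂ - m₁)/(v:ℝ))⁻¹)
    refine h.congr (Filter.Eventually.of_forall fun x => ?_)
    simp only [Pi.sub_apply]
    have hmm : m₂ - m₁ ≠ 0 := sub_ne_zero.mpr hne.symm
    field_simp
    ring
  -- integrability of the log-rn w.r.t. the central gaussian
  have hshift : (fun x => Real.log ((Q.rnDeriv (gaussianReal μₙ v)) x).toReal)
      =ᵐ[Q] fun x => Real.log ((Q.rnDeriv (gaussianReal m₁ v)) x).toReal
        + (((m₁ - μₙ)/(v:ℝ)) * x + ((μₙ^2 - m₁^2)/(2*(v:ℝ)))) := by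
    filter_upwards [log_rnDeriv_gaussian μₙ v hv Q hQV μₙ, log_rnDeriv_gaussian μₙ v hv Q hQV m₁]
      with x h1 h2
    rw [h1, h2, log_gaussianPDFReal _ hv, log_gaussianPDFReal _ hv]
    field_simp
    ring
  have hint : Integrable (fun x => Real.log ((Q.rnDeriv (gaussianReal μₙ v)) x).toReal) Q :=
    (hm₁.2.add ((hx1.const_mul _).add (integrable_const _))).congr hshift.symm
  refine ⟨hQV, hint, hx1, ?_⟩
  rw [core_lintegral μₙ v vₙ hv hvₙ Q hQV hint hx1] at hcon
  exact (ENNReal.ofReal_le_ofReal_iff hε).mp hcon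

/-- Gibbs / weak duality bound for a feasible `Q`. -/
lemma dro_gibbs (μₙ : ℝ) (v : ℝ≥0) (hv : v ≠ 0) {f : ℝ → ℝ} {C : ℝ}
    (hf : Measurable f) (hC : ∀ x, |f x| ≤ C) {γ : ℝ} (hγ : 0 < γ)
    (Q : Measure ℝ) [IsProbabilityMeasure Q] (hQV : Q ≪ (volume : Measure ℝ))
    (hint : Integrable (fun x => Real.log ((Q.rnDeriv (gaussianReal μₙ v)) x).toReal) Q) :
    ∫ x, f x ∂Q ≤ γ * (∫ x, Real.log ((Q.rnDeriv (gaussianReal μₙ v)) x).toReal ∂Q)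
      + γ * Real.log (droA μₙ v f γ) := by
  haveI : IsProbabilityMeasure (droQ μₙ v f γ) := dro_Q_prob hf hC hγ
  set A := droA μₙ v f γ with hA
  have hApos : 0 < A := dro_A_pos hf hC hγ
  have hdens_pos : ∀ x, (gaussianPDF μₙ v x * ENNReal.ofReal (rexp (f x / γ) / A)) ≠ 0 := by
    intro x
    apply mul_ne_zero (gaussianPDF_pos _ hv x).ne'
    simp only [ne_eq, ENNReal.ofReal_eq_zero, not_le]
    exact dro_rho_pos hf hC hγ x
  have hdens_top : ∀ x, (gaussianPDF μₙ v x * ENNReal.ofReal (rexp (f x / γ) / A)) ≠ ⊤ :=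
    fun x => ENNReal.mul_ne_top ENNReal.ofReal_ne_top ENNReal.ofReal_ne_top
  have hdens_meas : Measurable fun x =>
      gaussianPDF μₙ v x * ENNReal.ofReal (rexp (f x / γ) / A) :=
    (measurable_gaussianPDF μₙ v).mul ((hf.div_const γ).exp.div_const _).ennreal_ofReal
  have hQQγ : Q ≪ droQ μₙ v f γ := by
    rw [dro_Q_eq_wd hv hf]
    exact hQV.trans (withDensity_absolutelyContinuous' hdens_meas.aemeasurable
      (Filter.Eventually.of_forall hdens_pos))
  have h₁ := log_rnDeriv_withDensity Q hQV hdens_meas hdens_pos hdens_top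
  rw [← dro_Q_eq_wd hv hf] at h₁
  have h₂ := log_rnDeriv_gaussian μₙ v hv Q hQV μₙ
  have hkey : (fun x => Real.log ((Q.rnDeriv (droQ μₙ v f γ)) x).toReal)
      =ᵐ[Q] fun x => Real.log ((Q.rnDeriv (gaussianReal μₙ v)) x).toReal
        - (f x / γ - Real.log A) := by
    filter_upwards [h₁, h₂] with x hx1 hx2
    rw [hx1, hx2, ENNReal.toReal_mul,
      show (gaussianPDF μₙ v x).toReal = gaussianPDFReal μₙ v x from
        ENNReal.toReal_ofReal (gaussianPDFReal_nonneg μₙ v x),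
      ENNReal.toReal_ofReal (le_of_lt (dro_rho_pos hf hC hγ x)),
      Real.log_mul (gaussianPDFReal_pos μₙ v x hv).ne' (dro_rho_pos hf hC hγ x).ne',
      dro_log_rho hf hC hγ x]
    ring
  have hfint : Integrable f Q := integrable_of_bounded' hf hC
  have hgi : Integrable (fun a => f a / γ - Real.log A) Q := by
    exact (hfint.div_const γ).sub (integrable_const (Real.log A))
  have hint2 : Integrable (fun x => Real.log ((Q.rnDeriv (droQ μₙ v f γ)) x).toReal) Q :=
    (hint.sub hgi).congr hkey.symm
  have h0 := integral_log_rnDeriv_nonneg hQQγ hint2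
  rw [integral_congr_ae hkey,
    integral_sub hint hgi,
    integral_sub (hfint.div_const γ) (integrable_const _), integral_div, integral_const] at h0
  simp only [measure_univ, ENNReal.toReal_one, probReal_univ, one_smul, smul_eq_mul, one_mul] at h0
  have := (div_le_iff₀ hγ).mp (by linarith : (∫ x, f x ∂Q) / γ
    ≤ (∫ x, Real.log ((Q.rnDeriv (gaussianReal μₙ v)) x).toReal ∂Q) + Real.log A)
  linarith

lemma dro_BA_eq {μₙ : ℝ} {v : ℝ≥0} {f : ℝ → ℝ} {γ C : ℝ}
    (hf : Measurable f) (hC : ∀ x, |f x| ≤ C) (hγ : 0 < γ) :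
    droB μₙ v f γ / droA μₙ v f γ
      = γ * droK μₙ v f γ + γ * Real.log (droA μₙ v f γ) := by
  rw [droK, mul_sub]
  rw [mul_comm γ (droB μₙ v f γ / droA μₙ v f γ / γ),
    div_mul_cancel₀ _ hγ.ne']
  ring

theorem dro_bas_dual_gaussian_known_variance
    (μₙ σ σₙ : ℝ) (hσ : 0 < σ) (hσₙ : 0 < σₙ)
    (f : ℝ → ℝ) (hf_meas : Measurable f) (hf_bdd : ∃ C : ℝ, ∀ x, |f x| ≤ C)
    (ε : ℝ) (hε : σₙ ^ 2 / (2 * σ ^ 2) < ε) :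
    sSup {r : ℝ | ∃ Q : Measure ℝ, IsProbabilityMeasure Q ∧
        (∫⁻ μ, klDiv Q (gaussianReal μ (Real.toNNReal (σ ^ 2)))
          ∂(gaussianReal μₙ (Real.toNNReal (σₙ ^ 2)))) ≤ ENNReal.ofReal ε ∧
        r = ∫ ξ, f ξ ∂Q}
      = sInf {r : ℝ | ∃ γ : ℝ, 0 < γ ∧
          r = γ * (ε - σₙ ^ 2 / (2 * σ ^ 2))
            + γ * Real.log (∫ ξ, Real.exp (f ξ / γ)
                ∂(gaussianReal μₙ (Real.toNNReal (σ ^ 2))))} := by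
  obtain ⟨C₀, hC₀⟩ := hf_bdd
  set C := max C₀ 0 with hCdef
  have hC : ∀ x, |f x| ≤ C := fun x => le_trans (hC₀ x) (le_max_left _ _)
  have hC0 : 0 ≤ C := le_max_right _ _
  set v : ℝ≥0 := Real.toNNReal (σ ^ 2) with hvdef
  set vₙ : ℝ≥0 := Real.toNNReal (σₙ ^ 2) with hvₙdef
  have hv : v ≠ 0 := by
    rw [hvdef, ne_eq, Real.toNNReal_eq_zero, not_le]
    positivity
  have hvₙ : vₙ ≠ 0 := by
    rw [hvₙdef, ne_eq, Real.toNNReal_eq_zero, not_le]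
    positivity
  have hvcoe : (v:ℝ) = σ^2 := Real.coe_toNNReal _ (sq_nonneg σ)
  have hvₙcoe : (vₙ:ℝ) = σₙ^2 := Real.coe_toNNReal _ (sq_nonneg σₙ)
  set δ₀ : ℝ := σₙ^2/(2*σ^2) with hδ₀def
  have hδ₀pos : 0 < δ₀ := by rw [hδ₀def]; positivity
  have hδ₀coe : (vₙ:ℝ)/(2*(v:ℝ)) = δ₀ := by rw [hvcoe, hvₙcoe]
  set δ : ℝ := ε - δ₀ with hδdef
  have hδpos : 0 < δ := by rw [hδdef]; linarith
  have hεnn : 0 ≤ ε := by linarith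
  set S := {r : ℝ | ∃ Q : Measure ℝ, IsProbabilityMeasure Q ∧
      (∫⁻ μ, klDiv Q (gaussianReal μ v) ∂(gaussianReal μₙ vₙ)) ≤ ENNReal.ofReal ε ∧
      r = ∫ ξ, f ξ ∂Q} with hSdef
  set T := {r : ℝ | ∃ γ : ℝ, 0 < γ ∧
      r = γ * (ε - δ₀) + γ * Real.log (∫ ξ, Real.exp (f ξ / γ) ∂(gaussianReal μₙ v))} with hTdef
  show sSup S = sInf T
  have hAeq : ∀ γ : ℝ, (∫ ξ, Real.exp (f ξ / γ) ∂(gaussianReal μₙ v)) = droA μₙ v f γ :=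
    fun γ => rfl
  have hTmem : ∀ γ : ℝ, 0 < γ →
      (γ * δ + γ * Real.log (droA μₙ v f γ)) ∈ T := by
    intro γ hγ
    exact ⟨γ, hγ, by rw [hAeq, hδdef]⟩
  have hSmem : ∀ γ : ℝ, 0 < γ → droK μₙ v f γ ≤ δ →
      (∫ ξ, f ξ ∂(droQ μₙ v f γ)) ∈ S := by
    intro γ hγ hK
    refine ⟨droQ μₙ v f γ, dro_Q_prob hf_meas hC hγ, ?_, rfl⟩
    rw [dro_lintegral hv hvₙ hf_meas hC hC0 hγ]
    apply ENNReal.ofReal_le_ofReal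
    rw [hδ₀coe]
    rw [hδdef] at hK
    linarith
  -- weak duality
  have hle : ∀ s ∈ S, ∀ t ∈ T, s ≤ t := by
    rintro s ⟨Q, hQprob, hQcon, rfl⟩ t ⟨γ, hγ, rfl⟩
    haveI := hQprob
    obtain ⟨hQV, hint, hx1, hKbound⟩ := dro_feasible_K μₙ v vₙ hv hvₙ hεnn Q hQcon
    have h1 := dro_gibbs μₙ v hv hf_meas hC hγ Q hQV hint
    rw [hδ₀coe] at hKbound
    have hK : (∫ x, Real.log ((Q.rnDeriv (gaussianReal μₙ v)) x).toReal ∂Q) ≤ δ := by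
      rw [hδdef]; linarith
    rw [hAeq]
    have h2 : γ * (∫ x, Real.log ((Q.rnDeriv (gaussianReal μₙ v)) x).toReal ∂Q) ≤ γ * δ :=
      mul_le_mul_of_nonneg_left hK (le_of_lt hγ)
    have : γ * (ε - δ₀) = γ * δ := by rw [hδdef]
    linarith
  -- nonemptiness and bounds
  set γ₁ : ℝ := 2*(C+1)/δ with hγ₁def
  have hγ₁pos : 0 < γ₁ := by rw [hγ₁def]; positivity
  have hKγ₁ : droK μₙ v f γ₁ ≤ δ := by
    refine le_trans (dro_K_le hf_meas hC hC0 hγ₁pos) ?_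
    have he : 2*C/γ₁ = δ * (C/(C+1)) := by
      rw [hγ₁def]
      field_simp
    rw [he]
    calc δ * (C/(C+1)) ≤ δ * 1 := by
          apply mul_le_mul_of_nonneg_left _ (le_of_lt hδpos)
          rw [div_le_one (by linarith)]
          linarith
      _ = δ := mul_one δ
  have hSne : S.Nonempty := ⟨_, hSmem γ₁ hγ₁pos hKγ₁⟩
  have hTne : T.Nonempty := ⟨_, hTmem 1 one_pos⟩
  obtain ⟨s₀, hs₀⟩ := hSne
  obtain ⟨t₀, ht₀⟩ := hTne
  have hSbdd : BddAbove S := ⟨t₀, fun s hs => hle s hs t₀ ht₀⟩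
  have hTbdd : BddBelow T := ⟨s₀, fun t ht => hle s₀ hs₀ t ht⟩
  have hd1 : sSup S ≤ sInf T :=
    csSup_le ⟨s₀, hs₀⟩ fun s hs => le_csInf ⟨t₀, ht₀⟩ fun t ht => hle s hs t ht
  -- strong duality
  set Sγ := {γ : ℝ | 0 < γ ∧ droK μₙ v f γ ≤ δ} with hSγdef
  have hSγne : Sγ.Nonempty := ⟨γ₁, hγ₁pos, hKγ₁⟩
  have hSγbdd : BddBelow Sγ := ⟨0, fun γ hγ => le_of_lt hγ.1⟩
  set γz := sInf Sγ with hγzdef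
  have hγz0 : 0 ≤ γz := le_csInf hSγne fun γ hγ => le_of_lt hγ.1
  have hd2 : sInf T ≤ sSup S := by
    rcases lt_or_eq_of_le hγz0 with hpos | heq
    · -- γz > 0 : K γz = δ
      have hKcont := dro_K_cont (μₙ := μₙ) (v := v) hf_meas hC hC0 hpos
      have hKle : droK μₙ v f γz ≤ δ := by
        by_contra hgt
        push_neg at hgt
        have hev : (fun γ => droK μₙ v f γ) ⁻¹' Set.Ioi δ ∈ 𝓝 γz :=
          hKcont (Ioi_mem_nhds hgt)
        obtain ⟨η, hη, hball⟩ := Metric.mem_nhds_iff.mp hev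
        obtain ⟨γ, hγmem, hγlt⟩ := exists_lt_of_csInf_lt hSγne
          (show sInf Sγ < γz + η by rw [← hγzdef]; linarith)
        have hγge : γz ≤ γ := csInf_le hSγbdd hγmem
        have hin : γ ∈ Metric.ball γz η := by
          rw [Metric.mem_ball, Real.dist_eq, abs_lt]
          constructor <;> linarith
        exact absurd hγmem.2 (not_le.mpr (hball hin))
      have hKge : δ ≤ droK μₙ v f γz := by
        by_contra hlt
        push_neg at hlt
        have hev : (fun γ => droK μₙ v f γ) ⁻¹' Set.Iio δ ∈ 𝓝 γz :=
          hKcont (Iio_mem_nhds hlt)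
        obtain ⟨η, hη, hball⟩ := Metric.mem_nhds_iff.mp hev
        set γ' := max (γz - η/2) (γz/2) with hγ'def
        have hγ'pos : 0 < γ' := lt_of_lt_of_le (by linarith) (le_max_right _ _)
        have hγ'lt : γ' < γz := by
          apply max_lt <;> linarith
        have hin : γ' ∈ Metric.ball γz η := by
          rw [Metric.mem_ball, Real.dist_eq, abs_lt]
          have h1 : γz - η/2 ≤ γ' := le_max_left _ _
          constructor <;> linarith
        have hγ'mem : γ' ∈ Sγ := ⟨hγ'pos, le_of_lt (hball hin)⟩
        have := csInf_le hSγbdd hγ'mem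
        rw [← hγzdef] at this
        linarith
      have hKeq : droK μₙ v f γz = δ := le_antisymm hKle hKge
      have hval : (∫ ξ, f ξ ∂(droQ μₙ v f γz)) = γz * δ + γz * Real.log (droA μₙ v f γz) := by
        rw [dro_value hf_meas hC hpos, dro_BA_eq hf_meas hC hpos, hKeq]
      calc sInf T ≤ γz * δ + γz * Real.log (droA μₙ v f γz) :=
            csInf_le hTbdd (hTmem γz hpos)
        _ = ∫ ξ, f ξ ∂(droQ μₙ v f γz) := hval.symm
        _ ≤ sSup S := le_csSup hSbdd (hSmem γz hpos hKle)
    · -- γz = 0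
      refine le_of_forall_pos_le_add fun η hη => ?_
      obtain ⟨γ, hγmem, hγlt⟩ := exists_lt_of_csInf_lt hSγne
        (show sInf Sγ < η/δ by rw [← hγzdef, ← heq]; positivity)
      have hγpos := hγmem.1
      have hKγ := hγmem.2
      have hKnn : 0 ≤ droK μₙ v f γ := dro_K_nonneg hv hf_meas hC hC0 hγpos
      have hval : (∫ ξ, f ξ ∂(droQ μₙ v f γ))
          = γ * droK μₙ v f γ + γ * Real.log (droA μₙ v f γ) := by
        rw [dro_value hf_meas hC hγpos, dro_BA_eq hf_meas hC hγpos]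
      have h1 : sInf T ≤ γ * δ + γ * Real.log (droA μₙ v f γ) :=
        csInf_le hTbdd (hTmem γ hγpos)
      have h2 : (∫ ξ, f ξ ∂(droQ μₙ v f γ)) ≤ sSup S :=
        le_csSup hSbdd (hSmem γ hγpos hKγ)
      have h3 : γ * δ ≤ η := by
        have := mul_le_mul_of_nonneg_right (le_of_lt hγlt) (le_of_lt hδpos)
        rw [div_mul_cancel₀ _ hδpos.ne'] at this
        linarith [this]
      have h4 : γ * droK μₙ v f γ ≤ γ * δ := mul_le_mul_of_nonneg_left hKγ (le_of_lt hγpos)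
      have h5 : 0 ≤ γ * droK μₙ v f γ := mul_nonneg (le_of_lt hγpos) hKnn
      linarith [hval, h1, h2]
  exact le_antisymm hd1 hd2
end
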